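/- arXiv:1810.02453 — 9 statements merged into one kernel-verified Lean document; each statement's English description precedes it below -/
import Mathlib

section
/- Let (a_1,b_1),...,(a_k,b_k) be i.i.d. pairs of random vectors in R^d x R^d such that E[a b^T] exists, and let A, B be the k x d matrices whose i-th rows are a_i^T and b_i^T respectively. Then E[det(A^T B)] = d! * binom(k,d) * det(E[a b^T]). -/
/-!
Row `i` of `AᵀB` is `∑ r, a_r i • b_r`, so multilinearity of the determinant in the rows expands
`det (AᵀB)` into a sum over maps `f : Fin d → Fin k` of the determinants with rows
`a_{f i} i • b_{f i}`; those with `f` not injective vanish, having two proportional rows.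
For injective `f` the rows depend on distinct, hence independent, samples, so every monomial of
the Leibniz expansion has as expectation the corresponding monomial of `E[a bᵀ]`. Each of the
`k! / (k - d)! = d! * binom(k, d)` injections thus contributes `det E[a bᵀ]`.
-/

open MeasureTheory Matrix ProbabilityTheory

theorem det_transpose_mul_eq_sum_embedding {R m n : Type*} [CommRing R]
    [Fintype m] [DecidableEq m] [Fintype n] [DecidableEq n] (A B : Matrix m n R) :
    (Aᵀ * B).det = ∑ f : n ↪ m, (of fun i j => A (f i) i * B (f i) j).det := by
  have hrows : Aᵀ * B = fun i => ∑ r, A r i • B r := by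
    ext i j
    simp [mul_apply, Finset.sum_apply]
  have hsum : (Aᵀ * B).det = ∑ f : n → m, (of fun i j => A (f i) i * B (f i) j).det := by
    rw [hrows]
    exact (detRowAlternating : (n → R) [⋀^n]→ₗ[R] R).map_sum _
  classical
  rw [hsum, ← Finset.sum_filter_of_ne (p := Function.Injective),
    Finset.sum_subtype (p := Function.Injective) _ fun f => by simp]
  · exact Fintype.sum_equiv (Equiv.subtypeInjectiveEquivEmbedding n m) _ _ fun _ => rfl
  · intro f _ hdet
    by_contra hf
    obtain ⟨i, j, hfij, hij⟩ := Function.not_injective_iff.mp hf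
    refine hdet <| (det_mul_column (fun i => A (f i) i) (B.submatrix f id)).trans ?_
    rw [det_zero_of_row_eq hij (by ext; simp [hfij]), mul_zero]

section Reindex

variable {E : Type*} [MeasurableSpace E] (μ : Measure E) [IsProbabilityMeasure μ]
  {κ : Type*} [Fintype κ] {𝕜 : Type*} [RCLike 𝕜]

theorem measurePreserving_pi_comp_embedding {ι : Type*} [Fintype ι] (f : ι ↪ κ) :
    MeasurePreserving (fun (w : κ → E) i => w (f i))
      (Measure.pi fun _ => μ) (Measure.pi fun _ => μ) := by
  refine ⟨by fun_prop, ?_⟩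
  have hindep : iIndepFun (fun i (w : κ → E) => w (f i)) (Measure.pi fun _ => μ) :=
    (iIndepFun_pi (X := fun _ => id) fun _ => aemeasurable_id).precomp f.injective
  rw [hindep.map_fun_eq_pi_map fun i => (measurable_pi_apply (f i)).aemeasurable]
  congr 1
  ext1 i
  exact (measurePreserving_eval _ (f i)).map_eq

theorem integrable_prod_comp_embedding {ι : Type*} [Fintype ι] {g : ι → E → 𝕜}
    (hg : ∀ i, Integrable (g i) μ) (f : ι ↪ κ) :
    Integrable (fun w : κ → E => ∏ i, g i (w (f i))) (Measure.pi fun _ => μ) :=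
  (measurePreserving_pi_comp_embedding μ f).integrable_comp_of_integrable
    (Integrable.fintype_prod (f := g) hg)

theorem integral_prod_comp_embedding {ι : Type*} [Fintype ι] {g : ι → E → 𝕜}
    (hg : ∀ i, Integrable (g i) μ) (f : ι ↪ κ) :
    ∫ w : κ → E, ∏ i, g i (w (f i)) ∂(Measure.pi fun _ => μ) = ∏ i, ∫ x, g i x ∂μ := by
  have hf := measurePreserving_pi_comp_embedding μ f
  have hprod := Integrable.fintype_prod (f := g) hg
  rw [← integral_fintype_prod_eq_prod, ← hf.map_eq,
    integral_map hf.measurable.aemeasurable (hf.map_eq ▸ hprod.aestronglyMeasurable)]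

variable {n : Type*} [Fintype n] [DecidableEq n] {g : n → n → E → 𝕜}

theorem integrable_det_comp_embedding (hg : ∀ i j, Integrable (g i j) μ) (f : n ↪ κ) :
    Integrable (fun w : κ → E => (of fun i j => g i j (w (f i))).det)
      (Measure.pi fun _ => μ) := by
  simp only [det_apply', of_apply]
  exact integrable_finsetSum _ fun σ _ =>
    (integrable_prod_comp_embedding μ (fun i => hg (σ i) i) (σ.toEmbedding.trans f)).const_mul _

theorem integral_det_comp_embedding (hg : ∀ i j, Integrable (g i j) μ) (f : n ↪ κ) :
    ∫ w : κ → E, (of fun i j => g i j (w (f i))).det ∂(Measure.pi fun _ => μ)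
      = (of fun i j => ∫ x, g i j x ∂μ).det := by
  simp only [det_apply', of_apply]
  rw [integral_finsetSum _ fun σ _ =>
    (integrable_prod_comp_embedding μ (fun i => hg (σ i) i) (σ.toEmbedding.trans f)).const_mul _]
  refine Finset.sum_congr rfl fun σ _ => ?_
  rw [integral_const_mul]
  exact congrArg _ (integral_prod_comp_embedding μ (fun i => hg (σ i) i) (σ.toEmbedding.trans f))

end Reindex

theorem stmt0_general (d k : ℕ)
    (μ : Measure ((Fin d → ℝ) × (Fin d → ℝ))) [IsProbabilityMeasure μ]
    (hint : ∀ i j : Fin d, Integrable (fun p => p.1 i * p.2 j) μ) :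
    ∫ w : Fin k → (Fin d → ℝ) × (Fin d → ℝ),
        ((Matrix.of fun i => (w i).1)ᵀ * Matrix.of fun i => (w i).2).det
      ∂(Measure.pi fun _ => μ)
    = (Nat.factorial d : ℝ) * (Nat.choose k d : ℝ) *
        (Matrix.of fun i j => ∫ p, p.1 i * p.2 j ∂μ).det := by
  simp only [det_transpose_mul_eq_sum_embedding, of_apply]
  rw [integral_finsetSum _ fun f _ => integrable_det_comp_embedding μ hint f]
  simp only [integral_det_comp_embedding μ hint, Finset.sum_const, Finset.card_univ,
    Fintype.card_embedding_eq, Fintype.card_fin, nsmul_eq_mul,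
    Nat.descFactorial_eq_factorial_mul_choose, Nat.cast_mul]

/-- Expected determinant of `AᵀB` for matrices with i.i.d. pairs of rows. -/
theorem stmt0 (d k : ℕ) (hd : 0 < d) (hdk : d ≤ k)
    (μ : Measure ((Fin d → ℝ) × (Fin d → ℝ))) [IsProbabilityMeasure μ]
    (hint : ∀ i j : Fin d, Integrable (fun p => p.1 i * p.2 j) μ) :
    ∫ w : Fin k → (Fin d → ℝ) × (Fin d → ℝ),
        ((Matrix.of fun i => (w i).1)ᵀ * Matrix.of fun i => (w i).2).det
      ∂(Measure.pi fun _ => μ)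
    = (Nat.factorial d : ℝ) * (Nat.choose k d : ℝ) *
        (Matrix.of fun i j => ∫ p, p.1 i * p.2 j ∂μ).det :=
  stmt0_general d k μ hint
end

section
/- For a random vector x in R^d with covariance second-moment matrix Sigma = E[x x^T], if x_1,...,x_k are i.i.d. copies of x forming the rows of matrix X in R^{k x d}, then E[det(X^T X)] = d! * binom(k,d) * det(Sigma). -/
/-!
Row `i` of `XᵀX` is `∑ₘ xₘᵢ • xₘ`, so multilinearity of the determinant in the rows writes
`det (XᵀX)` as a sum over all maps `r : Fin d → Fin k` of the determinant of the matrix with rows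
`x_{r i, i} • x_{r i}`. If `r` is not injective, two of these rows are proportional and the term
vanishes. If `r` is injective, the rows are independent, so the expectation of the determinant
(a signed sum of products of one entry per row) is the determinant of the entrywise
expectations, which is `det Σ`. There are `d! * C(k, d)` injective maps.
-/

open MeasureTheory Matrix

open Function ProbabilityTheory

theorem Matrix.det_mul_eq_sum_det_scaled_rows {m n R : Type*} [Fintype m] [Fintype n]
    [DecidableEq n] [CommRing R] (A : Matrix n m R) (B : Matrix m n R) :
    (A * B).det = ∑ r : n → m, (of fun i j => A i (r i) * B (r i) j).det := by
  have hAB : A * B = of fun i => ∑ l, A i l • B l := by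
    ext i j
    simp [mul_apply, Finset.sum_apply]
  rw [hAB]
  exact (detRowAlternating : (n → R) [⋀^n]→ₗ[R] R).toMultilinearMap.map_sum
    fun i l => A i l • B l

theorem Matrix.det_scaled_rows_comp_eq_zero {ι n R : Type*} [Fintype n] [DecidableEq n]
    [CommRing R] (c : n → R) (v : ι → n → R) {r : n → ι} (hr : ¬Injective r) :
    (of fun i j => c i * v (r i) j).det = 0 := by
  obtain ⟨i, j, hij, hne⟩ := not_injective_iff.mp hr
  calc _ = (∏ i, c i) * (of fun i => v (r i)).det := det_mul_column c _
    _ = 0 := by rw [det_zero_of_row_eq hne (congrArg v hij), mul_zero]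

theorem card_filter_injective {α β : Type*} [Fintype α] [Fintype β] [DecidableEq α]
    [DecidableEq β] :
    (Finset.univ.filter fun r : α → β => Injective r).card =
      (Fintype.card β).descFactorial (Fintype.card α) := by
  rw [← Fintype.card_subtype, Fintype.card_congr (Equiv.subtypeInjectiveEquivEmbedding α β),
    Fintype.card_embedding_eq]

theorem det_of_rows_eq_sum_perm {n : Type*} [Fintype n] [DecidableEq n] {E : n → Type*}
    {R : Type*} [CommRing R] (f : ∀ i, n → E i → R) (y : ∀ i, E i) :
    (of fun i j => f i j (y i)).det =
      ∑ σ : Equiv.Perm n, ((Equiv.Perm.sign σ : ℤ) : R) * ∏ i, f i (σ i) (y i) := by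
  rw [← det_transpose, det_apply']
  rfl

section IndependentRows

variable {n : Type*} [Fintype n] [DecidableEq n] {E : n → Type*} [∀ i, MeasurableSpace (E i)]
  {μ : ∀ i, Measure (E i)} [∀ i, SigmaFinite (μ i)] {𝕜 : Type*} [RCLike 𝕜] {f : ∀ i, n → E i → 𝕜}

theorem integrable_det_of_rows (hf : ∀ i j, Integrable (f i j) (μ i)) :
    Integrable (fun y => (of fun i j => f i j (y i)).det) (Measure.pi μ) := by
  simp_rw [det_of_rows_eq_sum_perm]
  exact integrable_finsetSum _ fun σ _ =>
    (Integrable.fintype_prod_dep fun i => hf i (σ i)).const_mul _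

theorem integral_det_of_rows (hf : ∀ i j, Integrable (f i j) (μ i)) :
    ∫ y, (of fun i j => f i j (y i)).det ∂Measure.pi μ = (of fun i j => ∫ x, f i j x ∂μ i).det := by
  simp_rw [det_of_rows_eq_sum_perm]
  rw [integral_finsetSum _ fun σ _ =>
      (Integrable.fintype_prod_dep fun i => hf i (σ i)).const_mul _,
    ← det_transpose, det_apply']
  refine Finset.sum_congr rfl fun σ _ => ?_
  rw [integral_const_mul, integral_fintype_prod_eq_prod]
  rfl

end IndependentRows

theorem measurePreserving_pi_comp_of_injective {ι n : Type*} [Fintype ι] [Fintype n]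
    {E : ι → Type*} [∀ i, MeasurableSpace (E i)] (μ : ∀ i, Measure (E i))
    [∀ i, IsProbabilityMeasure (μ i)] {r : n → ι} (hr : Injective r) :
    MeasurePreserving (fun w j => w (r j)) (Measure.pi μ) (Measure.pi fun j => μ (r j)) := by
  have hmeas : ∀ j, AEMeasurable (fun w : ∀ i, E i => w (r j)) (Measure.pi μ) :=
    fun j => (measurable_pi_apply (r j)).aemeasurable
  refine ⟨measurable_pi_lambda _ fun j => measurable_pi_apply (r j), ?_⟩
  rw [(iIndepFun_iff_map_fun_eq_pi_map hmeas).mp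
    ((iIndepFun_pi (X := fun _ => id) fun _ => aemeasurable_id).precomp hr)]
  congr
  ext j : 1
  exact (measurePreserving_eval μ (r j)).map_eq

section SecondMoments

variable {ι n : Type*} [Fintype ι] [Fintype n] [DecidableEq n] {μ : Measure (n → ℝ)}
  [IsProbabilityMeasure μ] (hint : ∀ i j, Integrable (fun x => x i * x j) μ)
include hint

theorem integrable_det_scaled_rows :
    Integrable (fun y : n → n → ℝ => (of fun i j => y i i * y i j).det)
      (Measure.pi fun _ => μ) :=
  integrable_det_of_rows (μ := fun _ => μ) (f := fun i j x => x i * x j) fun i j => hint i j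

theorem integrable_det_scaled_rows_comp (r : n → ι) :
    Integrable (fun w : ι → n → ℝ => (of fun i j => w (r i) i * w (r i) j).det)
      (Measure.pi fun _ => μ) := by
  by_cases hr : Injective r
  · have hG := integrable_det_scaled_rows hint
    exact ((measurePreserving_pi_comp_of_injective (fun _ => μ) hr).integrable_comp
      hG.aestronglyMeasurable).mpr hG
  · simp_rw [det_scaled_rows_comp_eq_zero _ _ hr]
    exact integrable_zero _ _ _

theorem integral_det_scaled_rows_comp [DecidableEq ι] (r : n → ι) :
    ∫ w : ι → n → ℝ, (of fun i j => w (r i) i * w (r i) j).det ∂(Measure.pi fun _ => μ) =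
      if Injective r then (of fun i j => ∫ x, x i * x j ∂μ).det else 0 := by
  by_cases hr : Injective r
  · have hmp := measurePreserving_pi_comp_of_injective (fun _ => μ) hr
    have hcomp := integral_map hmp.measurable.aemeasurable
      (hmp.map_eq ▸ (integrable_det_scaled_rows hint).aestronglyMeasurable)
    rw [hmp.map_eq] at hcomp
    rw [if_pos hr]
    exact hcomp.symm.trans <|
      integral_det_of_rows (μ := fun _ => μ) (f := fun i j x => x i * x j) fun i j => hint i j
  · simp_rw [if_neg hr, det_scaled_rows_comp_eq_zero _ _ hr, integral_zero]

end SecondMoments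

theorem stmt1_general (d k : ℕ)
    (μ : Measure (Fin d → ℝ)) [IsProbabilityMeasure μ]
    (hint : ∀ i j : Fin d, Integrable (fun x => x i * x j) μ) :
    ∫ w : Fin k → (Fin d → ℝ),
        ((Matrix.of w)ᵀ * Matrix.of w).det ∂(Measure.pi fun _ => μ)
    = (Nat.factorial d : ℝ) * (Nat.choose k d : ℝ) *
        (Matrix.of fun i j => ∫ x, x i * x j ∂μ).det := by
  calc ∫ w : Fin k → (Fin d → ℝ), ((of w)ᵀ * of w).det ∂(Measure.pi fun _ => μ)
      = ∫ w, ∑ r : Fin d → Fin k, (of fun i j => w (r i) i * w (r i) j).det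
          ∂(Measure.pi fun _ => μ) := by
        simp_rw [det_mul_eq_sum_det_scaled_rows]
        rfl
    _ = ∑ r : Fin d → Fin k, if Injective r then (of fun i j => ∫ x, x i * x j ∂μ).det else 0 := by
        rw [integral_finsetSum _ fun r _ => integrable_det_scaled_rows_comp hint r]
        simp_rw [integral_det_scaled_rows_comp hint]
    _ = (Nat.factorial d : ℝ) * (Nat.choose k d : ℝ) *
        (Matrix.of fun i j => ∫ x, x i * x j ∂μ).det := by
        rw [Finset.sum_ite, Finset.sum_const_zero, add_zero, Finset.sum_const,
          card_filter_injective, Fintype.card_fin, Fintype.card_fin,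
          Nat.descFactorial_eq_factorial_mul_choose, nsmul_eq_mul]
        push_cast
        ring

/-- Expected determinant of `XᵀX` for a matrix with i.i.d. rows equals
`d! * C(k,d) * det Σ` where `Σ = E[x xᵀ]`. -/
theorem stmt1 (d k : ℕ) (hd : 0 < d) (hdk : d ≤ k)
    (μ : Measure (Fin d → ℝ)) [IsProbabilityMeasure μ]
    (hint : ∀ i j : Fin d, Integrable (fun x => x i * x j) μ) :
    ∫ w : Fin k → (Fin d → ℝ),
        ((Matrix.of w)ᵀ * Matrix.of w).det ∂(Measure.pi fun _ => μ)
    = (Nat.factorial d : ℝ) * (Nat.choose k d : ℝ) *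
        (Matrix.of fun i j => ∫ x, x i * x j ∂μ).det :=
  stmt1_general d k μ hint
end

section
/- For a full-rank matrix X in R^{k x d} with k > d, det(X^T X) * (X^T X)^{-1} applied via Cramer's rule satisfies: the pseudoinverse decomposition X^+ = sum_{i=1}^k [(1 - x_i^T (X^T X)^{-1} x_i)/(k-d)] * (I_{-i} X)^+, where I_{-i} is the identity with the i-th diagonal entry set to 0 and x_i^T is the i-th row of X. -/
/-!
Let `H = X (XᵀX)⁻¹ Xᵀ` be the hat matrix and `hᵢ = Hᵢᵢ` the leverages. Deleting row `i` turns
`XᵀX` into the rank-one downdate `XᵀX - xᵢxᵢᵀ`, so by Sherman–Morrison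
`(1 - hᵢ) (I₋ᵢX)⁺ = (1 - hᵢ) X⁺ - (XᵀX)⁻¹ xᵢ ((I - H) eᵢ)ᵀ`. This also holds when `hᵢ = 1`: then
`I - H`, a symmetric idempotent with vanishing `i`-th diagonal entry, has vanishing `i`-th row.
Summing over `i`, the weights add up to `k - trace H = k - d`, and the correction terms add up to
`(XᵀX)⁻¹ Xᵀ (I - H) = 0`.
-/

open Matrix

/-- Moore–Penrose pseudoinverse of a full column rank matrix. -/
noncomputable def pinv {k d : ℕ} (X : Matrix (Fin k) (Fin d) ℝ) :
    Matrix (Fin d) (Fin k) ℝ :=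
  (Xᵀ * X)⁻¹ * Xᵀ

namespace Matrix

section Field

variable {m n o 𝕜 : Type*} [Fintype m] [Field 𝕜]

theorem transpose_mul_eq_sum_vecMulVec (X : Matrix m n 𝕜) (W : Matrix m o 𝕜) :
    Xᵀ * W = ∑ i, vecMulVec (X i) (W i) := by
  ext a b
  simp only [mul_apply, transpose_apply, sum_apply, vecMulVec_apply]

theorem one_sub_single_mul [DecidableEq m] (X : Matrix m n 𝕜) (i : m) :
    (1 - single i i 1 : Matrix m m 𝕜) * X = X - vecMulVec (Pi.single i 1) (X i) := by
  rw [Matrix.sub_mul, Matrix.one_mul, single_eq_single_vecMulVec_single, vecMulVec_mul,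
    single_one_vecMul, row]

theorem transpose_mul_self_sub_vecMulVec_single [DecidableEq m] (X : Matrix m n 𝕜) (i : m) :
    (X - vecMulVec (Pi.single i 1) (X i))ᵀ * (X - vecMulVec (Pi.single i 1) (X i)) =
      Xᵀ * X - vecMulVec (X i) (X i) := by
  rw [transpose_sub, transpose_vecMulVec, Matrix.sub_mul, Matrix.mul_sub, Matrix.mul_sub,
    mul_vecMulVec, vecMulVec_mul, vecMulVec_mul_vecMulVec, ← vecMul_transpose,
    transpose_transpose, single_one_vecMul, single_one_dotProduct, Pi.single_eq_same, one_smul,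
    row]
  abel

variable [Fintype n] [DecidableEq n]

theorem isUnit_of_rank_eq_card {B : Matrix n n 𝕜} (h : B.rank = Fintype.card n) : IsUnit B := by
  rw [← mulVec_surjective_iff_isUnit, ← coe_mulVecLin, ← LinearMap.range_eq_top]
  exact Submodule.eq_top_of_finrank_eq (by rw [← rank, h, Module.finrank_fintype_fun_eq_card])

/-- The **Sherman–Morrison formula**. -/
theorem inv_sub_vecMulVec {A : Matrix n n 𝕜} (hA : IsUnit A) (u v : n → 𝕜)
    (h : v ⬝ᵥ (A⁻¹ *ᵥ u) ≠ 1) :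
    (A - vecMulVec u v)⁻¹ =
      A⁻¹ + (1 - v ⬝ᵥ (A⁻¹ *ᵥ u))⁻¹ • vecMulVec (A⁻¹ *ᵥ u) (v ᵥ* A⁻¹) := by
  have hAdet := (isUnit_iff_isUnit_det A).mp hA
  have hc : (1 - v ⬝ᵥ (A⁻¹ *ᵥ u))⁻¹ * (1 - v ⬝ᵥ (A⁻¹ *ᵥ u)) = 1 :=
    inv_mul_cancel₀ (sub_ne_zero.mpr h.symm)
  apply inv_eq_right_inv
  rw [Matrix.mul_add, Matrix.mul_smul, Matrix.sub_mul, Matrix.sub_mul, mul_nonsing_inv A hAdet,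
    mul_vecMulVec, mulVec_mulVec, mul_nonsing_inv A hAdet, one_mulVec, vecMulVec_mul,
    vecMulVec_mul_vecMulVec, vecMulVec_smul]
  linear_combination (norm := module) hc • vecMulVec u (v ᵥ* A⁻¹)

noncomputable def hatMatrix (X : Matrix m n 𝕜) : Matrix m m 𝕜 :=
  X * (Xᵀ * X)⁻¹ * Xᵀ

theorem hatMatrix_row (X : Matrix m n 𝕜) (i : m) :
    hatMatrix X i = X i ᵥ* (Xᵀ * X)⁻¹ ᵥ* Xᵀ :=
  rfl

theorem hatMatrix_apply (X : Matrix m n 𝕜) (i j : m) :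
    hatMatrix X i j = X i ⬝ᵥ ((Xᵀ * X)⁻¹ *ᵥ X j) := by
  rw [hatMatrix_row, vecMul_transpose, dotProduct_mulVec, dotProduct_comm]
  rfl

theorem isSymm_hatMatrix (X : Matrix m n 𝕜) : (hatMatrix X).IsSymm := by
  rw [IsSymm, hatMatrix, transpose_mul, transpose_mul, transpose_transpose, transpose_nonsing_inv,
    transpose_mul, transpose_transpose, Matrix.mul_assoc]

variable {X : Matrix m n 𝕜}

theorem transpose_mul_hatMatrix (hX : IsUnit (Xᵀ * X)) : Xᵀ * hatMatrix X = Xᵀ := by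
  rw [hatMatrix, ← Matrix.mul_assoc, ← Matrix.mul_assoc,
    mul_nonsing_inv _ ((isUnit_iff_isUnit_det _).mp hX), Matrix.one_mul]

theorem isIdempotentElem_hatMatrix (hX : IsUnit (Xᵀ * X)) : IsIdempotentElem (hatMatrix X) := by
  rw [IsIdempotentElem]
  conv_lhs => arg 1; rw [hatMatrix]
  rw [Matrix.mul_assoc, transpose_mul_hatMatrix hX]
  rfl

theorem trace_hatMatrix (hX : IsUnit (Xᵀ * X)) : trace (hatMatrix X) = Fintype.card n := by
  rw [hatMatrix, Matrix.mul_assoc, trace_mul_comm, Matrix.mul_assoc,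
    nonsing_inv_mul _ ((isUnit_iff_isUnit_det _).mp hX), trace_one]

theorem sum_vecMulVec_inv_mulVec_one_sub_hatMatrix [DecidableEq m] (hX : IsUnit (Xᵀ * X)) :
    ∑ i, vecMulVec ((Xᵀ * X)⁻¹ *ᵥ X i) ((1 - hatMatrix X) i) = 0 := by
  simp only [← mul_vecMulVec, ← Matrix.mul_sum, ← transpose_mul_eq_sum_vecMulVec, Matrix.mul_sub,
    transpose_mul_hatMatrix hX, Matrix.mul_one, sub_self, Matrix.mul_zero]

end Field

section LinearOrderedField

variable {m n 𝕜 : Type*} [Fintype m] [Fintype n] [Field 𝕜] [LinearOrder 𝕜]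
  [IsStrictOrderedRing 𝕜]

theorem isUnit_transpose_mul_self_of_rank_eq [DecidableEq n] {X : Matrix m n 𝕜}
    (h : X.rank = Fintype.card n) : IsUnit (Xᵀ * X) :=
  isUnit_of_rank_eq_card (by rw [rank_transpose_mul_self, h])

theorem IsSymm.row_eq_zero_of_isIdempotentElem {P : Matrix m m 𝕜} (hP : P.IsSymm)
    (hPP : IsIdempotentElem P) {i : m} (hi : P i i = 0) : P i = 0 := by
  rw [← dotProduct_self_eq_zero, ← hi]
  calc P i ⬝ᵥ P i = (P * Pᵀ) i i := by simp only [mul_apply, dotProduct, transpose_apply]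
    _ = P i i := by rw [hP.eq, hPP.eq]

theorem one_sub_hatMatrix_row_eq_zero [DecidableEq m] [DecidableEq n] {X : Matrix m n 𝕜}
    (hX : IsUnit (Xᵀ * X)) {i : m} (hi : hatMatrix X i i = 1) :
    (1 - hatMatrix X) i = (0 : m → 𝕜) :=
  (isSymm_one.sub (isSymm_hatMatrix X)).row_eq_zero_of_isIdempotentElem
    (isIdempotentElem_hatMatrix hX).one_sub (by rw [sub_apply, one_apply_eq, hi, sub_self])

end LinearOrderedField

end Matrix

theorem smul_pinv_one_sub_single_mul {k d : ℕ} {X : Matrix (Fin k) (Fin d) ℝ}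
    (hX : IsUnit (Xᵀ * X)) (i : Fin k) :
    (1 - hatMatrix X i i) • pinv ((1 - single i i 1 : Matrix (Fin k) (Fin k) ℝ) * X) =
      (1 - hatMatrix X i i) • pinv X - vecMulVec ((Xᵀ * X)⁻¹ *ᵥ X i) ((1 - hatMatrix X) i) := by
  by_cases hi : hatMatrix X i i = 1
  · -- here `pinv` of the deleted matrix is the junk value `0`, but its weight vanishes anyway
    rw [hi, sub_self, zero_smul, zero_smul, zero_sub, one_sub_hatMatrix_row_eq_zero hX hi]
    exact (neg_eq_zero.mpr (ext fun _ _ => mul_zero _)).symm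
  have hc : (1 - hatMatrix X i i)⁻¹ * (1 - hatMatrix X i i) = 1 :=
    inv_mul_cancel₀ (sub_ne_zero.mpr (Ne.symm hi))
  rw [hatMatrix_apply] at hi
  have hrow : (1 - hatMatrix X) i = Pi.single i 1 - X i ᵥ* (Xᵀ * X)⁻¹ ᵥ* Xᵀ :=
    funext fun j => by rw [Matrix.sub_apply, one_eq_pi_single, hatMatrix_row, Pi.sub_apply]
  rw [pinv, pinv, one_sub_single_mul, transpose_mul_self_sub_vecMulVec_single,
    inv_sub_vecMulVec hX _ _ hi, transpose_sub, transpose_vecMulVec, ← hatMatrix_apply, hrow,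
    Matrix.add_mul, Matrix.smul_mul, Matrix.mul_sub, Matrix.mul_sub, mul_vecMulVec, vecMulVec_mul,
    vecMulVec_mul_vecMulVec, ← dotProduct_mulVec, ← hatMatrix_apply, vecMulVec_smul,
    vecMulVec_sub]
  linear_combination (norm := module)
    hc • (vecMulVec ((Xᵀ * X)⁻¹ *ᵥ X i) (X i ᵥ* (Xᵀ * X)⁻¹ ᵥ* Xᵀ) -
      hatMatrix X i i • vecMulVec ((Xᵀ * X)⁻¹ *ᵥ X i) (Pi.single i 1))

theorem stmt3_general (d n : ℕ) (hdn : d < n + 1)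
    (X : Matrix (Fin (n + 1)) (Fin d) ℝ) (hrank : X.rank = d) :
    pinv X =
      ∑ i : Fin (n + 1),
        ((1 - X i ⬝ᵥ ((Xᵀ * X)⁻¹ *ᵥ X i)) / ((n + 1 : ℝ) - d)) •
          pinv (((1 : Matrix (Fin (n + 1)) (Fin (n + 1)) ℝ) - Matrix.single i i 1) * X) := by
  have hX : IsUnit (Xᵀ * X) := isUnit_transpose_mul_self_of_rank_eq (by rw [hrank, Fintype.card_fin])
  have hk : (n + 1 : ℝ) - d ≠ 0 := sub_ne_zero.mpr (by exact_mod_cast hdn.ne')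
  have hweights : ∑ i, (1 - hatMatrix X i i) = (n + 1 : ℝ) - d := by
    have htrace := trace_hatMatrix hX
    simp only [trace, diag, Fintype.card_fin] at htrace
    simp [Finset.sum_sub_distrib, htrace]
  simp_rw [← hatMatrix_apply, div_eq_inv_mul, ← smul_smul, ← Finset.smul_sum,
    smul_pinv_one_sub_single_mul hX, Finset.sum_sub_distrib, ← Finset.sum_smul, hweights,
    sum_vecMulVec_inv_mulVec_one_sub_hatMatrix hX, sub_zero, smul_smul, inv_mul_cancel₀ hk,
    one_smul]

/-- Pseudoinverse decomposition: `X⁺ = ∑ᵢ (1 - xᵢᵀ(XᵀX)⁻¹xᵢ)/(k-d) • (I₋ᵢX)⁺`. -/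
theorem stmt3 (d n : ℕ) (hd : 0 < d) (hdn : d < n + 1)
    (X : Matrix (Fin (n + 1)) (Fin d) ℝ) (hrank : X.rank = d) :
    pinv X =
      ∑ i : Fin (n + 1),
        ((1 - X i ⬝ᵥ ((Xᵀ * X)⁻¹ *ᵥ X i)) / ((n + 1 : ℝ) - d)) •
          pinv (((1 : Matrix (Fin (n + 1)) (Fin (n + 1)) ℝ) - Matrix.single i i 1) * X) :=
  stmt3_general d n hdn X hrank
end

section
/- Volume-rescaled sampling VS^k is a probability measure: for any distribution D_X on R^d with invertible second moment Sigma = E[x x^T], the measure A |-> E_{D_X^k}[1_A * det(sum_{i=1}^k x_i x_i^T)] / (d! binom(k,d) det(Sigma)) on (R^d)^k assigns total mass 1. -/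
/-!
Write the sample as the matrix `X` with rows `w j`, so that the density is `det (Xᵀ X)`.
Expanding the determinant multilinearly in the columns of `X` (Cauchy–Binet) gives
`det (Xᵀ X) = ∑_{r : d ↪ k} det (columns r of Xᵀ) * ∏ i, X (r i) i`, the terms with
non-injective `r` vanishing because of repeated columns. For injective `r` the rows `w (r i)` are
independent, so each term has expectation `∑ σ, sign σ * ∏ i, Σ (σ i) i = det Σ`. Hence
`E[det (Xᵀ X)] = k! / (k - d)! * det Σ = d! * choose k d * det Σ`, while `det (Xᵀ X) ≥ 0` since
`Xᵀ X` is positive semidefinite.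
-/

open MeasureTheory Matrix Finset Function Equiv

section CauchyBinet

variable {R : Type*} [CommRing R] {m n : Type*} [Fintype n] [DecidableEq n]

theorem Matrix.det_mul_eq_sum_embedding [Fintype m] (A : Matrix n m R) (B : Matrix m n R) :
    (A * B).det = ∑ r : n ↪ m, (A.submatrix id r).det * ∏ i, B (r i) i := by
  have expand : (A * B).det = ∑ r : n → m, (A.submatrix id r).det * ∏ i, B (r i) i := by
    simp only [det_apply', mul_apply, prod_univ_sum, Fintype.piFinset_univ, mul_sum, sum_mul,
      submatrix_apply, id, ← prod_mul_distrib, mul_assoc]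
    exact sum_comm
  rw [expand]
  refine (Fintype.sum_of_injective _ DFunLike.coe_injective _ _ (fun r hr => ?_) fun _ => rfl).symm
  have hr : ¬Injective r := fun h => hr ⟨⟨r, h⟩, rfl⟩
  obtain ⟨i, j, hij, hne⟩ := not_injective_iff.mp hr
  rw [det_zero_of_column_eq hne fun _ => by simp [hij], zero_mul]

theorem Matrix.det_transpose_submatrix_mul_prod (w : m → n → R) (r : n ↪ m) :
    ((of w)ᵀ.submatrix id r).det * ∏ i, of w (r i) i
      = ∑ σ : Perm n, (Perm.sign σ : R) * ∏ i, w (r i) (σ i) * w (r i) i := by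
  simp only [det_apply', sum_mul, prod_mul_distrib, mul_assoc]
  rfl

end CauchyBinet

section ProductIntegral

variable {ι κ E : Type*} [Fintype ι] [Fintype κ] [MeasurableSpace E] {μ : Measure E}
  [IsProbabilityMeasure μ] {r : ι → κ}

theorem Function.Injective.prod_apply_extend_one {F N : Type*} [One F] [CommMonoid N]
    (hr : Injective r) (g : ι → F) (Φ : κ → F → N) (hΦ : ∀ j, Φ j 1 = 1) :
    ∏ j, Φ j (extend r g 1 j) = ∏ i, Φ (r i) (g i) :=
  (Fintype.prod_of_injective r hr _ _ (fun j hj => by simp [extend_apply' _ _ _ hj, hΦ])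
    fun i => by simp [hr.extend_apply]).symm

theorem integrable_pi_prod_comp_of_injective (hr : Injective r) {g : ι → E → ℝ}
    (hg : ∀ i, Integrable (g i) μ) :
    Integrable (fun w : κ → E => ∏ i, g i (w (r i))) (Measure.pi fun _ => μ) := by
  have hG : ∀ j, Integrable (extend r g 1 j) μ := by
    intro j
    by_cases hj : ∃ i, r i = j
    · obtain ⟨i, rfl⟩ := hj
      simpa [hr.extend_apply] using hg i
    · rw [extend_apply' _ _ _ hj]
      exact integrable_const 1
  exact (Integrable.fintype_prod (μ := fun _ => μ) hG).congr <| ae_of_all _ fun w =>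
    hr.prod_apply_extend_one g (fun j h => h (w j)) fun _ => rfl

theorem integral_pi_prod_comp_of_injective (hr : Injective r) (g : ι → E → ℝ) :
    ∫ w : κ → E, ∏ i, g i (w (r i)) ∂(Measure.pi fun _ => μ) = ∏ i, ∫ x, g i x ∂μ := by
  have hprod (w : κ → E) : ∏ j, extend r g 1 j (w j) = ∏ i, g i (w (r i)) :=
    hr.prod_apply_extend_one g (fun j h => h (w j)) fun _ => rfl
  simp_rw [← hprod, integral_fintype_prod_eq_prod]
  exact hr.prod_apply_extend_one g (fun _ h => ∫ x, h x ∂μ) fun _ => by simp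

end ProductIntegral

section GramDeterminant

variable {m n : Type*} [Fintype m]

theorem sum_vecMulVec_self_eq_transpose_mul (w : m → n → ℝ) :
    ∑ j, vecMulVec (w j) (w j) = (of w)ᵀ * of w := by
  ext a b
  simp [Matrix.sum_apply, mul_apply, vecMulVec_apply]

variable [Fintype n] [DecidableEq n]

theorem det_sum_vecMulVec_self_nonneg (w : m → n → ℝ) :
    0 ≤ (∑ j, vecMulVec (w j) (w j)).det := by
  rw [sum_vecMulVec_self_eq_transpose_mul, ← conjTranspose_eq_transpose_of_trivial]
  exact (posSemidef_conjTranspose_mul_self _).det_nonneg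

variable (μ : Measure (n → ℝ)) [IsProbabilityMeasure μ]

theorem integrable_det_sum_vecMulVec_self
    (hint : ∀ i j : n, Integrable (fun x => x i * x j) μ) :
    Integrable (fun w : m → n → ℝ => (∑ j, vecMulVec (w j) (w j)).det)
      (Measure.pi fun _ => μ) := by
  simp_rw [sum_vecMulVec_self_eq_transpose_mul, det_mul_eq_sum_embedding,
    det_transpose_submatrix_mul_prod]
  refine integrable_finsetSum _ fun r _ => integrable_finsetSum _ fun σ _ => ?_
  exact (integrable_pi_prod_comp_of_injective r.injective fun i => hint (σ i) i).const_mul _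

theorem integral_det_sum_vecMulVec_self
    (hint : ∀ i j : n, Integrable (fun x => x i * x j) μ) :
    ∫ w : m → n → ℝ, (∑ j, vecMulVec (w j) (w j)).det ∂(Measure.pi fun _ => μ)
      = Fintype.card (n ↪ m) * (of fun i j => ∫ x, x i * x j ∂μ).det := by
  simp_rw [sum_vecMulVec_self_eq_transpose_mul, det_mul_eq_sum_embedding,
    det_transpose_submatrix_mul_prod]
  have hterm (r : n ↪ m) (σ : Perm n) : Integrable
      (fun w : m → n → ℝ => (Perm.sign σ : ℝ) * ∏ i, w (r i) (σ i) * w (r i) i)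
      (Measure.pi fun _ => μ) :=
    (integrable_pi_prod_comp_of_injective r.injective fun i => hint (σ i) i).const_mul _
  have hdet (r : n ↪ m) : ∫ w : m → n → ℝ, ∑ σ : Perm n,
      (Perm.sign σ : ℝ) * ∏ i, w (r i) (σ i) * w (r i) i ∂(Measure.pi fun _ => μ)
        = (of fun i j => ∫ x, x i * x j ∂μ).det := by
    rw [integral_finsetSum _ fun σ _ => hterm r σ, det_apply']
    refine sum_congr rfl fun σ _ => ?_
    rw [integral_const_mul,
      integral_pi_prod_comp_of_injective r.injective fun i (x : n → ℝ) => x (σ i) * x i]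
    rfl
  rw [integral_finsetSum _ fun r _ => integrable_finsetSum _ fun σ _ => hterm r σ]
  simp [hdet]

end GramDeterminant

theorem isProbabilityMeasure_withDensity_ofReal_div {α : Type*} [MeasurableSpace α]
    {μ : Measure α} {f : α → ℝ} (hf : Integrable f μ) (hf0 : ∀ x, 0 ≤ f x) {c : ℝ}
    (hc : ∫ x, f x ∂μ = c) (hc0 : c ≠ 0) :
    IsProbabilityMeasure (μ.withDensity fun x => ENNReal.ofReal (f x / c)) := by
  have hc_pos : 0 < c := (hc ▸ integral_nonneg hf0).lt_of_ne' hc0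
  constructor
  rw [withDensity_apply _ MeasurableSet.univ, setLIntegral_univ,
    ← ofReal_integral_eq_lintegral_ofReal (hf.div_const c)
      (ae_of_all _ fun x => div_nonneg (hf0 x) hc_pos.le),
    integral_div, hc, div_self hc0, ENNReal.ofReal_one]

theorem stmt6_general (d k : ℕ) (hdk : d ≤ k)
    (μ : Measure (Fin d → ℝ)) [IsProbabilityMeasure μ]
    (hint : ∀ i j : Fin d, Integrable (fun x => x i * x j) μ)
    (Sg : Matrix (Fin d) (Fin d) ℝ)
    (hSg : Sg = Matrix.of fun i j => ∫ x, x i * x j ∂μ)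
    (hinv : IsUnit Sg.det) :
    IsProbabilityMeasure
      ((Measure.pi fun _ : Fin k => μ).withDensity fun w =>
        ENNReal.ofReal ((∑ i, vecMulVec (w i) (w i)).det /
          ((Nat.factorial d : ℝ) * (Nat.choose k d : ℝ) * Sg.det))) := by
  have hcard : (Fintype.card (Fin d ↪ Fin k) : ℝ) = d.factorial * k.choose d := by
    rw [Fintype.card_embedding_eq, Fintype.card_fin, Fintype.card_fin,
      Nat.descFactorial_eq_factorial_mul_choose, Nat.cast_mul]
  refine isProbabilityMeasure_withDensity_ofReal_div (integrable_det_sum_vecMulVec_self μ hint)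
    det_sum_vecMulVec_self_nonneg ?_ ?_
  · rw [integral_det_sum_vecMulVec_self μ hint, hcard, hSg]
  · have := Nat.choose_pos hdk
    exact mul_ne_zero (by positivity) hinv.ne_zero

/-- Volume-rescaled sampling `VS^k` is a probability measure. -/
theorem stmt6 (d k : ℕ) (hd : 0 < d) (hdk : d ≤ k)
    (μ : Measure (Fin d → ℝ)) [IsProbabilityMeasure μ]
    (hint : ∀ i j : Fin d, Integrable (fun x => x i * x j) μ)
    (Sg : Matrix (Fin d) (Fin d) ℝ)
    (hSg : Sg = Matrix.of fun i j => ∫ x, x i * x j ∂μ)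
    (hinv : IsUnit Sg.det) :
    IsProbabilityMeasure
      ((Measure.pi fun _ : Fin k => μ).withDensity fun w =>
        ENNReal.ofReal ((∑ i, vecMulVec (w i) (w i)).det /
          ((Nat.factorial d : ℝ) * (Nat.choose k d : ℝ) * Sg.det))) :=
  stmt6_general d k hdk μ hint Sg hSg hinv
end

section
/- In the discrete setting: for a fixed matrix X in R^{n x d} of rank d and d <= k <= n, first sampling a set S_o of size d with probability det(X_{S_o})^2 / det(X^T X), then adding a uniformly random subset R of size k-d from the remaining n-d rows, yields a set S = S_o ∪ R distributed as size-k volume sampling, i.e. P(S) = det(X_S^T X_S) / (binom(n-d, k-d) det(X^T X)). -/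
open Matrix Finset Equiv BigOperators

namespace VS

variable {ι : Type*} [Fintype ι] [DecidableEq ι] {d : ℕ}

/-- Non-injective assignments contribute zero (analog of `Matrix.det_mul_aux`). -/
lemma aux_zero (A : Matrix (Fin d) ι ℝ) (B : Matrix ι (Fin d) ℝ) {p : Fin d → ι}
    (H : ¬Function.Injective p) :
    (∑ σ : Perm (Fin d), ((Perm.sign σ : ℤ) : ℝ) * ∏ x, A (σ x) (p x) * B (p x) x) = 0 := by
  obtain ⟨i, j, hpij, hij⟩ : ∃ i j, p i = p j ∧ i ≠ j := by
    rw [Function.Injective] at H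
    push_neg at H
    obtain ⟨i, j, h1, h2⟩ := H
    exact ⟨i, j, h1, h2⟩
  exact
    Finset.sum_involution (fun σ _ => σ * Equiv.swap i j)
      (fun σ _ => by
        have : (∏ x, A (σ x) (p x)) = ∏ x, A ((σ * Equiv.swap i j) x) (p x) :=
          Fintype.prod_equiv (Equiv.swap i j) _ _ (by simp [Equiv.apply_swap_eq_self hpij])
        simp [this, Perm.sign_swap hij, -Perm.sign_swap', Finset.prod_mul_distrib])
      (fun σ _ _ => (not_congr Equiv.mul_swap_eq_iff).mpr hij) (fun _ _ => Finset.mem_univ _)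
      fun σ _ => Equiv.mul_swap_involutive i j σ

/-- The double permutation sum equals `det A' * det B'`. -/
lemma sum_perm_eq (A' B' : Matrix (Fin d) (Fin d) ℝ) :
    ∑ τ : Perm (Fin d), ∑ σ : Perm (Fin d),
        ((Perm.sign σ : ℤ) : ℝ) * ∏ i, A' (σ i) (τ i) * B' (τ i) i
      = det A' * det B' := by
  rw [← det_mul]
  calc
    (∑ τ : Perm (Fin d), ∑ σ : Perm (Fin d),
        ((Perm.sign σ : ℤ) : ℝ) * ∏ i, A' (σ i) (τ i) * B' (τ i) i)
      = ∑ p ∈ (Finset.univ : Finset (Fin d → Fin d)).filter Function.Bijective,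
          ∑ σ : Perm (Fin d), ((Perm.sign σ : ℤ) : ℝ) * ∏ i, A' (σ i) (p i) * B' (p i) i :=
      (Finset.sum_bij (fun (p : Fin d → Fin d) h => Equiv.ofBijective p (Finset.mem_filter.1 h).2)
        (fun _ _ => Finset.mem_univ _) (fun _ _ _ _ h => by injection h)
        (fun b _ => ⟨b, Finset.mem_filter.2 ⟨Finset.mem_univ _, b.bijective⟩,
          coe_fn_injective rfl⟩) fun _ _ => rfl).symm
    _ = ∑ p : Fin d → Fin d,
          ∑ σ : Perm (Fin d), ((Perm.sign σ : ℤ) : ℝ) * ∏ i, A' (σ i) (p i) * B' (p i) i := by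
      refine Finset.sum_subset (Finset.filter_subset _ _) fun f _ hbij => Matrix.det_mul_aux ?_
      simpa only [true_and, Finset.mem_filter, Finset.mem_univ] using hbij
    _ = det (A' * B') := by
      simp only [det_apply', mul_apply, Finset.prod_univ_sum, Finset.mul_sum,
        Fintype.piFinset_univ]
      rw [Finset.sum_comm]

/-- Group injective functions `Fin d → ι` by (image, permutation). -/
lemma group_inj [LinearOrder ι] (F : (Fin d → ι) → ℝ) :
    ∑ p ∈ (Finset.univ : Finset (Fin d → ι)).filter Function.Injective, F p
      = ∑ x : {T : Finset ι // T.card = d} × Perm (Fin d),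
          F (fun i => x.1.1.orderEmbOfFin x.1.2 (x.2 i)) := by
  refine (Finset.sum_bij
    (fun (x : {T : Finset ι // T.card = d} × Perm (Fin d)) _ =>
      fun i => x.1.1.orderEmbOfFin x.1.2 (x.2 i)) ?_ ?_ ?_ ?_).symm
  · intro x _
    refine Finset.mem_filter.2 ⟨Finset.mem_univ _, ?_⟩
    exact (x.1.1.orderEmbOfFin x.1.2).injective.comp x.2.injective
  · intro x _ y _ h
    have key : ∀ z : {T : Finset ι // T.card = d} × Perm (Fin d),
        Set.range (fun i => z.1.1.orderEmbOfFin z.1.2 (z.2 i)) = (z.1.1 : Set ι) := by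
      intro z
      have hco : (fun i => z.1.1.orderEmbOfFin z.1.2 (z.2 i))
          = (z.1.1.orderEmbOfFin z.1.2) ∘ z.2 := rfl
      rw [hco, Set.range_comp, Equiv.range_eq_univ, Set.image_univ,
        Finset.range_orderEmbOfFin]
    have hrange : (x.1.1 : Set ι) = (y.1.1 : Set ι) := by
      rw [← key x, ← key y]
      exact congrArg Set.range h
    have hT : x.1 = y.1 := Subtype.ext (Finset.coe_injective hrange)
    obtain ⟨⟨T, hTc⟩, τ⟩ := x
    obtain ⟨⟨T', hTc'⟩, τ'⟩ := y
    cases (show T = T' from congrArg Subtype.val hT)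
    refine Prod.ext rfl ?_
    show τ = τ'
    exact Equiv.ext fun i => (T.orderEmbOfFin hTc).injective (congrFun h i)
  · intro p hp
    have hpinj : Function.Injective p := (Finset.mem_filter.1 hp).2
    set T : Finset ι := Finset.univ.image p with hTdef
    have hT : T.card = d := by
      rw [hTdef, Finset.card_image_of_injective _ hpinj, Finset.card_univ, Fintype.card_fin]
    have hmem : ∀ i, p i ∈ T := fun i => Finset.mem_image.2 ⟨i, Finset.mem_univ _, rfl⟩
    have hτinj : Function.Injective (fun i => (T.orderIsoOfFin hT).symm ⟨p i, hmem i⟩) := by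
      intro a b hab
      exact hpinj (congrArg Subtype.val ((T.orderIsoOfFin hT).symm.injective hab))
    let τ : Perm (Fin d) :=
      Equiv.ofBijective _ ((Finite.injective_iff_bijective).1 hτinj)
    refine ⟨⟨⟨T, hT⟩, τ⟩, Finset.mem_univ _, ?_⟩
    funext i
    show T.orderEmbOfFin hT ((T.orderIsoOfFin hT).symm ⟨p i, hmem i⟩) = p i
    rw [← Finset.coe_orderIsoOfFin_apply, OrderIso.apply_symm_apply]
  · intro x _
    rfl

/-- Cauchy–Binet over the reals. -/
theorem cauchyBinet [LinearOrder ι] (A : Matrix (Fin d) ι ℝ) (B : Matrix ι (Fin d) ℝ) :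
    det (A * B) = ∑ T : {T : Finset ι // T.card = d},
      det (A.submatrix id (T.1.orderEmbOfFin T.2)) * det (B.submatrix (T.1.orderEmbOfFin T.2) id) := by
  calc
    det (A * B)
      = ∑ p : Fin d → ι,
          ∑ σ : Perm (Fin d), ((Perm.sign σ : ℤ) : ℝ) * ∏ i, A (σ i) (p i) * B (p i) i := by
        simp only [det_apply', mul_apply, Finset.prod_univ_sum, Finset.mul_sum,
          Fintype.piFinset_univ]
        rw [Finset.sum_comm]
    _ = ∑ p ∈ (Finset.univ : Finset (Fin d → ι)).filter Function.Injective,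
          ∑ σ : Perm (Fin d), ((Perm.sign σ : ℤ) : ℝ) * ∏ i, A (σ i) (p i) * B (p i) i := by
      refine (Finset.sum_subset (Finset.filter_subset _ _) fun f _ hinj => aux_zero A B ?_).symm
      simpa only [true_and, Finset.mem_filter, Finset.mem_univ] using hinj
    _ = ∑ x : {T : Finset ι // T.card = d} × Perm (Fin d),
          ∑ σ : Perm (Fin d), ((Perm.sign σ : ℤ) : ℝ) *
            ∏ i, A (σ i) (x.1.1.orderEmbOfFin x.1.2 (x.2 i))
              * B (x.1.1.orderEmbOfFin x.1.2 (x.2 i)) i :=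
      group_inj _
    _ = ∑ T : {T : Finset ι // T.card = d}, ∑ τ : Perm (Fin d),
          ∑ σ : Perm (Fin d), ((Perm.sign σ : ℤ) : ℝ) *
            ∏ i, A (σ i) (T.1.orderEmbOfFin T.2 (τ i)) * B (T.1.orderEmbOfFin T.2 (τ i)) i := by
      rw [Fintype.sum_prod_type]
    _ = ∑ T : {T : Finset ι // T.card = d},
          det (A.submatrix id (T.1.orderEmbOfFin T.2))
            * det (B.submatrix (T.1.orderEmbOfFin T.2) id) := by
      refine Finset.sum_congr rfl fun T _ => ?_
      exact sum_perm_eq (A.submatrix id (T.1.orderEmbOfFin T.2))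
        (B.submatrix (T.1.orderEmbOfFin T.2) id)


/-- Rewriting the Gram matrix of rows in `So` using any enumeration `e` of `So`. -/
lemma gram_reindex {n' : ℕ} {c : Type*} [Fintype c] (X : Matrix (Fin n') c ℝ) {m : ℕ}
    (So : Finset (Fin n')) (hcard : So.card = m) (e : Fin m → Fin n')
    (he : Function.Injective e) (hmem : ∀ i, e i ∈ So) :
    (X.submatrix (fun i : {x // x ∈ So} => (i : Fin n')) id)ᵀ *
        X.submatrix (fun i : {x // x ∈ So} => (i : Fin n'))  id
      = (X.submatrix e id)ᵀ * X.submatrix e id := by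
  ext i j
  simp only [mul_apply, transpose_apply, submatrix_apply, id]
  have hinj : Function.Injective (fun t : Fin m => (⟨e t, hmem t⟩ : {x // x ∈ So})) :=
    fun a b hab => he (congrArg Subtype.val hab)
  have hcards : Fintype.card (Fin m) = Fintype.card {x // x ∈ So} := by
    rw [Fintype.card_coe, hcard, Fintype.card_fin]
  have hbij := (Fintype.bijective_iff_injective_and_card _).2 ⟨hinj, hcards⟩
  exact (Fintype.sum_bijective _ hbij _ _ fun t => rfl).symm

/-- The Cauchy–Binet identity in the form needed: sum of Gram determinants of `d`-subsets. -/
lemma sum_gram {n k d : ℕ} (X : Matrix (Fin n) (Fin d) ℝ) (S : Finset (Fin n))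
    (hS : S.card = k) :
    ∑ So ∈ S.powersetCard d,
        ((X.submatrix (fun i : {x // x ∈ So} => (i : Fin n)) id)ᵀ *
            X.submatrix (fun i : {x // x ∈ So} => (i : Fin n)) id).det
      = ((X.submatrix (fun i : {x // x ∈ S} => (i : Fin n)) id)ᵀ *
            X.submatrix (fun i : {x // x ∈ S} => (i : Fin n)) id).det := by
  set gS := S.orderEmbOfFin hS with hgS
  set M : Matrix (Fin k) (Fin d) ℝ := X.submatrix gS id with hM
  have hRHS : ((X.submatrix (fun i : {x // x ∈ S} => (i : Fin n)) id)ᵀ *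
      X.submatrix (fun i : {x // x ∈ S} => (i : Fin n)) id).det = det (Mᵀ * M) := by
    rw [gram_reindex X S hS gS gS.injective (fun i => S.orderEmbOfFin_mem hS i)]
  rw [hRHS, cauchyBinet Mᵀ M]
  refine (Finset.sum_bij
    (fun (T : {T : Finset (Fin k) // T.card = d}) _ => T.1.map gS.toEmbedding)
    ?_ ?_ ?_ ?_).symm
  · intro T _
    refine Finset.mem_powersetCard.2 ⟨fun x hx => ?_, by
      rw [Finset.card_map]; exact T.2⟩
    obtain ⟨i, _, rfl⟩ := Finset.mem_map.1 hx
    exact S.orderEmbOfFin_mem hS i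
  · intro T _ T' _ h
    exact Subtype.ext (Finset.map_injective gS.toEmbedding h)
  · intro So hSo
    obtain ⟨hsub, hcard⟩ := Finset.mem_powersetCard.1 hSo
    set T : Finset (Fin k) := Finset.univ.filter (fun i => gS i ∈ So) with hTdef
    have hmapT : T.map gS.toEmbedding = So := by
      ext x
      constructor
      · intro hx
        obtain ⟨i, hi, rfl⟩ := Finset.mem_map.1 hx
        exact (Finset.mem_filter.1 hi).2
      · intro hx
        have hxS : x ∈ S := hsub hx
        have : x ∈ Set.range gS := by rw [Finset.range_orderEmbOfFin]; exact hxS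
        obtain ⟨i, rfl⟩ := this
        exact Finset.mem_map.2 ⟨i, Finset.mem_filter.2 ⟨Finset.mem_univ _, hx⟩, rfl⟩
    have hTcard : T.card = d := by
      rw [← hcard, ← hmapT, Finset.card_map]
    exact ⟨⟨T, hTcard⟩, Finset.mem_univ _, hmapT⟩
  · intro T _
    have hgram := gram_reindex X (T.1.map gS.toEmbedding)
      (by rw [Finset.card_map]; exact T.2)
      (fun i => gS (T.1.orderEmbOfFin T.2 i))
      (gS.injective.comp (T.1.orderEmbOfFin T.2).injective)
      (fun i => Finset.mem_map.2 ⟨T.1.orderEmbOfFin T.2 i, T.1.orderEmbOfFin_mem T.2 i, rfl⟩)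
    have htr : Mᵀ.submatrix id (T.1.orderEmbOfFin T.2)
        = (X.submatrix (fun i => gS (T.1.orderEmbOfFin T.2 i)) id)ᵀ := rfl
    have hsub : M.submatrix (T.1.orderEmbOfFin T.2) id
        = X.submatrix (fun i => gS (T.1.orderEmbOfFin T.2 i)) id := rfl
    rw [hgram, htr, hsub, det_mul, det_transpose]

end VS

/-- Padding a size-`d` volume sample with a uniform subset of the remaining
rows yields size-`k` volume sampling. -/
theorem stmt8 (n d k : ℕ) (hd : 0 < d) (hdk : d ≤ k) (hkn : k ≤ n)
    (X : Matrix (Fin n) (Fin d) ℝ) (hrank : X.rank = d)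
    (S : Finset (Fin n)) (hS : S.card = k) :
    ∑ So ∈ S.powersetCard d,
        (1 / ((Nat.choose (n - d) (k - d) : ℝ))) *
          (((X.submatrix (fun i : {x // x ∈ So} => (i : Fin n)) id)ᵀ *
              X.submatrix (fun i : {x // x ∈ So} => (i : Fin n)) id).det /
            (Xᵀ * X).det)
      = ((X.submatrix (fun i : {x // x ∈ S} => (i : Fin n)) id)ᵀ *
            X.submatrix (fun i : {x // x ∈ S} => (i : Fin n)) id).det /
          ((Nat.choose (n - d) (k - d) : ℝ) * (Xᵀ * X).det) := by
  have h1 : ∀ So ∈ S.powersetCard d,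
      (1 / ((Nat.choose (n - d) (k - d) : ℝ))) *
          (((X.submatrix (fun i : {x // x ∈ So} => (i : Fin n)) id)ᵀ *
              X.submatrix (fun i : {x // x ∈ So} => (i : Fin n)) id).det /
            (Xᵀ * X).det)
        = (((X.submatrix (fun i : {x // x ∈ So} => (i : Fin n)) id)ᵀ *
              X.submatrix (fun i : {x // x ∈ So} => (i : Fin n)) id).det) /
            ((Nat.choose (n - d) (k - d) : ℝ) * (Xᵀ * X).det) := by
    intro So _
    ring
  rw [Finset.sum_congr rfl h1, ← Finset.sum_div, VS.sum_gram X S hS]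
end

section
/- For samples of size d from volume-rescaled sampling with responses, the least squares estimator is unbiased: if (x_1,y_1),...,(x_d,y_d) are drawn so that the x's follow VS^d_{D_X} and each y_i ~ D_{Y|x=x_i}, then E[w*(S)] = Sigma^{-1} E_D[x y], where w*(S) solves the d x d linear system X w = y (using Cramer's rule). -/
/-!
By Cramer's rule, `det(X)² • X⁻¹y = det(X) • (det X_k)_k`, where `X_k` is `X` with its `k`-th
column replaced by `y`: the volume-sampling weight cancels the inverse. For i.i.d. rows, expanding
both determinants over permutations and integrating factor by factor gives
`E[det F · det G] = d! · det E[f gᵀ]` for row maps `f, g`. Taking `f = x` and `g = x` with its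
`k`-th coordinate replaced by `y` yields `d! · det Σ_k`, where `Σ_k` is `Σ` with `k`-th column
`E[x y]`, and Cramer's rule for `Σ` turns `(det Σ_k / det Σ)_k` into `Σ⁻¹ E[x y]`.
Taking `f = g = x` gives `d! · det Σ = E[det(X)²] ≥ 0`, so the density is nonnegative.
-/

open MeasureTheory Matrix

namespace Matrix

variable {n R : Type*} [Fintype n] [DecidableEq n] [CommRing R]

theorem det_eq_sum_sign_mul_prod_apply (A : Matrix n n R) :
    A.det = ∑ σ : Equiv.Perm n, (Equiv.Perm.sign σ : R) * ∏ i, A i (σ i) := by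
  rw [← det_transpose, det_apply']
  rfl

theorem det_mul_det_eq_sum_sum (A B : Matrix n n R) :
    A.det * B.det = ∑ σ : Equiv.Perm n, ∑ τ : Equiv.Perm n,
      (Equiv.Perm.sign σ : R) * (Equiv.Perm.sign τ : R) * ∏ i, A i (σ i) * B i (τ i) := by
  simp_rw [det_eq_sum_sign_mul_prod_apply, Finset.sum_mul_sum, Finset.prod_mul_distrib]
  exact Finset.sum_congr rfl fun σ _ => Finset.sum_congr rfl fun τ _ => by ring

theorem sum_sum_sign_mul_sign_mul_prod (M : Matrix n n R) :
    ∑ σ : Equiv.Perm n, ∑ τ : Equiv.Perm n,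
      (Equiv.Perm.sign σ : R) * (Equiv.Perm.sign τ : R) * ∏ i, M (σ i) (τ i)
      = (Fintype.card n).factorial * M.det := by
  have row_permuted (σ : Equiv.Perm n) : ∑ τ : Equiv.Perm n,
      (Equiv.Perm.sign σ : R) * (Equiv.Perm.sign τ : R) * ∏ i, M (σ i) (τ i) = M.det := by
    simp_rw [mul_assoc, ← Finset.mul_sum]
    have h : ∑ τ : Equiv.Perm n, (Equiv.Perm.sign τ : R) * ∏ i, M (σ i) (τ i)
        = (M.submatrix σ id).det := (det_eq_sum_sign_mul_prod_apply _).symm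
    rw [h, det_permute, ← mul_assoc, ← Int.cast_mul, ← Units.val_mul, Int.units_mul_self]
    simp
  simp [row_permuted, Fintype.card_perm]

theorem det_sq_smul_inv_mulVec {K : Type*} [Field K] (A : Matrix n n K) (b : n → K) :
    A.det ^ 2 • (A⁻¹ *ᵥ b) = A.det • cramer A b := by
  rcases eq_or_ne A.det 0 with h | h
  · simp [h]
  · rw [sq, mul_smul, det_smul_inv_mulVec_eq_cramer A b h.isUnit]

end Matrix

section ExpectedDetProduct

variable {Ω ι : Type*} [MeasurableSpace Ω] {μ : Measure Ω} [SigmaFinite μ]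
  [Fintype ι] [DecidableEq ι] {f g : Ω → ι → ℝ}

theorem integrable_det_mul_det_pi (hfg : ∀ a b, Integrable (fun ω => f ω a * g ω b) μ) :
    Integrable (fun ω : ι → Ω => (of fun i => f (ω i)).det * (of fun i => g (ω i)).det)
      (Measure.pi fun _ => μ) := by
  simp_rw [det_mul_det_eq_sum_sum, of_apply]
  refine integrable_finsetSum _ fun σ _ => integrable_finsetSum _ fun τ _ => ?_
  exact (Integrable.fintype_prod (f := fun i p => f p (σ i) * g p (τ i))
    fun i => hfg (σ i) (τ i)).const_mul _

theorem integral_det_mul_det_pi (hfg : ∀ a b, Integrable (fun ω => f ω a * g ω b) μ) :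
    ∫ ω : ι → Ω, (of fun i => f (ω i)).det * (of fun i => g (ω i)).det ∂(Measure.pi fun _ => μ)
      = (Fintype.card ι).factorial * (of fun a b => ∫ ω, f ω a * g ω b ∂μ).det := by
  have hprod (σ τ : Equiv.Perm ι) := Integrable.fintype_prod
    (f := fun i p => f p (σ i) * g p (τ i)) (μ := fun _ => μ) fun i => hfg (σ i) (τ i)
  simp_rw [det_mul_det_eq_sum_sum, of_apply, ← sum_sum_sign_mul_sign_mul_prod, of_apply]
  rw [integral_finsetSum _ fun σ _ => integrable_finsetSum _ fun τ _ => (hprod σ τ).const_mul _]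
  refine Finset.sum_congr rfl fun σ _ => ?_
  rw [integral_finsetSum _ fun τ _ => (hprod σ τ).const_mul _]
  refine Finset.sum_congr rfl fun τ _ => ?_
  rw [integral_const_mul, integral_fintype_prod_eq_prod (fun i p => f p (σ i) * g p (τ i))]

theorem det_gram_nonneg (hf : ∀ a b, Integrable (fun ω => f ω a * f ω b) μ) :
    0 ≤ (of fun a b => ∫ ω, f ω a * f ω b ∂μ).det := by
  have h := integral_det_mul_det_pi hf
  have hsq : 0 ≤ ∫ ω : ι → Ω, (of fun i => f (ω i)).det * (of fun i => f (ω i)).det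
      ∂(Measure.pi fun _ => μ) := integral_nonneg fun ω => mul_self_nonneg _
  exact nonneg_of_mul_nonneg_right (h ▸ hsq) (by positivity)

end ExpectedDetProduct

theorem integrable_mul_of_integrable_sq {Ω : Type*} [MeasurableSpace Ω] {μ : Measure Ω}
    {f g : Ω → ℝ} (hf : AEStronglyMeasurable f μ) (hg : AEStronglyMeasurable g μ)
    (hf2 : Integrable (fun ω => f ω ^ 2) μ) (hg2 : Integrable (fun ω => g ω ^ 2) μ) :
    Integrable (fun ω => f ω * g ω) μ :=
  ((memLp_two_iff_integrable_sq hf).2 hf2).integrable_mul ((memLp_two_iff_integrable_sq hg).2 hg2)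

theorem integral_withDensity_ofReal_eq_integral_smul {X E : Type*} [MeasurableSpace X]
    {μ : Measure X} [NormedAddCommGroup E] [NormedSpace ℝ E] {f : X → ℝ}
    (hf : Measurable f) (hf0 : 0 ≤ f) (g : X → E) :
    ∫ x, g x ∂μ.withDensity (fun x => ENNReal.ofReal (f x)) = ∫ x, f x • g x ∂μ := by
  rw [integral_withDensity_eq_integral_toReal_smul hf.ennreal_ofReal
    (ae_of_all _ fun _ => ENNReal.ofReal_lt_top)]
  simp_rw [ENNReal.toReal_ofReal (hf0 _)]

section SampleMoments

variable {ι : Type*} [DecidableEq ι] {μ : Measure ((ι → ℝ) × ℝ)}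

theorem integrable_fst_mul_update_fst_snd (hx2 : ∀ a b, Integrable (fun p => p.1 a * p.1 b) μ)
    (hy2 : Integrable (fun p => p.2 ^ 2) μ) (k a b : ι) :
    Integrable (fun p => p.1 a * Function.update p.1 k p.2 b) μ := by
  rcases eq_or_ne b k with rfl | hb
  · simp only [Function.update_self]
    exact integrable_mul_of_integrable_sq (by fun_prop) (by fun_prop)
      (by simpa only [sq] using hx2 a a) hy2
  · simpa only [Function.update_of_ne hb] using hx2 a b

theorem gram_update_eq_updateCol (k : ι) :
    (of fun a b => ∫ p, p.1 a * Function.update p.1 k p.2 b ∂μ)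
      = (of fun a b => ∫ p, p.1 a * p.1 b ∂μ).updateCol k fun a => ∫ p, p.1 a * p.2 ∂μ := by
  ext a b
  rcases eq_or_ne b k with rfl | hb
  · simp
  · simp [hb]

theorem integral_det_smul_cramer_pi [Fintype ι] [SigmaFinite μ]
    (hx2 : ∀ a b, Integrable (fun p => p.1 a * p.1 b) μ)
    (hy2 : Integrable (fun p => p.2 ^ 2) μ) :
    ∫ S : ι → (ι → ℝ) × ℝ,
        (of fun i => (S i).1).det • cramer (of fun i => (S i).1) (fun i => (S i).2)
        ∂(Measure.pi fun _ => μ)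
      = ((Fintype.card ι).factorial : ℝ) •
          cramer (of fun a b => ∫ p, p.1 a * p.1 b ∂μ) (fun a => ∫ p, p.1 a * p.2 ∂μ) := by
  have hfg (k : ι) := integrable_fst_mul_update_fst_snd hx2 hy2 k
  have hintegrable (k : ι) : Integrable (fun S : ι → (ι → ℝ) × ℝ =>
      ((of fun i => (S i).1).det • cramer (of fun i => (S i).1) fun i => (S i).2) k)
        (Measure.pi fun _ => μ) :=
    integrable_det_mul_det_pi (hfg k)
  ext k
  rw [eval_integral hintegrable, Pi.smul_apply, cramer_apply, ← gram_update_eq_updateCol]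
  exact integral_det_mul_det_pi (hfg k)

end SampleMoments

theorem stmt9_general (d : ℕ)
    (D : Measure ((Fin d → ℝ) × ℝ)) [IsProbabilityMeasure D]
    (hx2 : ∀ i j : Fin d, Integrable (fun p => p.1 i * p.1 j) D)
    (hy2 : Integrable (fun p => p.2 ^ 2) D)
    (Sg : Matrix (Fin d) (Fin d) ℝ)
    (hSg : Sg = Matrix.of fun i j => ∫ p, p.1 i * p.1 j ∂D)
    (hinv : IsUnit Sg.det) :
    (∫ S : Fin d → (Fin d → ℝ) × ℝ,
        (Matrix.of fun i => (S i).1)⁻¹ *ᵥ (fun i => (S i).2)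
        ∂((Measure.pi fun _ : Fin d => D).withDensity fun S =>
          ENNReal.ofReal ((Matrix.of fun i => (S i).1).det ^ 2 /
            ((Nat.factorial d : ℝ) * Sg.det))))
    = Sg⁻¹ *ᵥ (fun i => ∫ p, p.1 i * p.2 ∂D) := by
  have hdet : 0 < Sg.det := (hSg ▸ det_gram_nonneg hx2).lt_of_ne' hinv.ne_zero
  rw [integral_withDensity_ofReal_eq_integral_smul ((by fun_prop : Continuous _).measurable)
    fun S => by positivity]
  simp_rw [div_eq_inv_mul, mul_smul, det_sq_smul_inv_mulVec]
  rw [integral_smul, integral_det_smul_cramer_pi hx2 hy2, Fintype.card_fin, ← hSg,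
    ← det_smul_inv_mulVec_eq_cramer _ _ hinv, smul_smul, smul_smul,
    mul_assoc, inv_mul_cancel₀ (by positivity), one_smul]

/-- The least squares estimator of a size-`d` volume-rescaled sample
(with responses drawn conditionally) is unbiased. -/
theorem stmt9 (d : ℕ) (hd : 0 < d)
    (D : Measure ((Fin d → ℝ) × ℝ)) [IsProbabilityMeasure D]
    (hx2 : ∀ i j : Fin d, Integrable (fun p => p.1 i * p.1 j) D)
    (hy2 : Integrable (fun p => p.2 ^ 2) D)
    (Sg : Matrix (Fin d) (Fin d) ℝ)
    (hSg : Sg = Matrix.of fun i j => ∫ p, p.1 i * p.1 j ∂D)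
    (hinv : IsUnit Sg.det) :
    (∫ S : Fin d → (Fin d → ℝ) × ℝ,
        (Matrix.of fun i => (S i).1)⁻¹ *ᵥ (fun i => (S i).2)
        ∂((Measure.pi fun _ : Fin d => D).withDensity fun S =>
          ENNReal.ofReal ((Matrix.of fun i => (S i).1).det ^ 2 /
            ((Nat.factorial d : ℝ) * Sg.det))))
    = Sg⁻¹ *ᵥ (fun i => ∫ p, p.1 i * p.2 ∂D) :=
  stmt9_general d D hx2 hy2 Sg hSg hinv
end

section
/- For any k >= d, the least squares estimator computed from a size-k volume-rescaled sample with conditionally sampled responses is unbiased: E_{VS^k_D}[w*(S)] = Sigma^{-1} E_D[x y]. -/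
/-!
By Cramer's rule, `det(XᵀX) • w*(S)` is the vector whose `j`-th entry is `det(Xᵀ X_j)`, where `X_j`
is `X` with its `j`-th column replaced by `y`; this also holds for singular `XᵀX`, because then
`adj(XᵀX) Xᵀ = 0`. Since the volume-rescaled density is `det(XᵀX)` up to normalisation, it remains
to compute `E det(Xᵀ X_j)` under i.i.d. sampling. Expanding `det(∑_τ u_τ v_τᵀ)` multilinearly in
the columns gives a sum over index maps `t : [d] → [k]`; the terms with `t` not injective vanish,
and for each of the `k!/(k-d)!` injective `t` the sampled points are independent, so the term has
expectation `det E[u vᵀ]`. Hence `E det(Xᵀ X_j) = d! C(k,d) det(Σ with column j replaced by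
E[x y])`, and Cramer's rule for `Σ` concludes. The case `k = d` of the same identity shows
`det Σ ≥ 0`, so that the normalising constant is positive.
-/

open MeasureTheory Matrix

section LinearAlgebra

variable {R : Type*} [CommRing R] {n ι : Type*} [Fintype ι]

theorem Matrix.transpose_mul_eq_sum_vecMulVec_s10 (X Y : Matrix ι n R) :
    Xᵀ * Y = ∑ τ, vecMulVec (X τ) (Y τ) := by
  ext a b
  simp [mul_apply, sum_apply, vecMulVec_apply]

theorem Matrix.updateCol_transpose_mul_self [DecidableEq n] (X : Matrix ι n R) (y : ι → R)
    (j : n) :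
    (Xᵀ * X).updateCol j (Xᵀ *ᵥ y) = ∑ τ, vecMulVec (X τ) (Function.update (X τ) j (y τ)) := by
  ext a b
  by_cases hb : b = j
  · subst hb
    simp [sum_apply, vecMulVec_apply, mulVec, dotProduct]
  · simp [sum_apply, vecMulVec_apply, mul_apply, hb]

variable [Fintype n] [DecidableEq n]

theorem Matrix.det_sum_vecMulVec (u v : ι → n → R) :
    (∑ τ, vecMulVec (u τ) (v τ)).det =
      ∑ t : n → ι, (of fun a c => u (t c) a * v (t c) c).det := by
  simp_rw [det_apply', sum_apply, vecMulVec_apply, Finset.prod_univ_sum, Finset.mul_sum, of_apply]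
  exact Finset.sum_comm

omit [Fintype ι] in
theorem Matrix.det_of_mul_eq_zero_of_not_injective (u v : ι → n → R) {t : n → ι}
    (ht : ¬ t.Injective) : (of fun a c => u (t c) a * v (t c) c).det = 0 := by
  obtain ⟨c, c', htc, hne⟩ := Function.not_injective_iff.mp ht
  have hfactor : (of fun a c => u (t c) a * v (t c) c) =
      of fun a c => v (t c) c * (of fun a c => u (t c) a) a c := by
    ext; simp [mul_comm]
  rw [hfactor, det_mul_row, det_zero_of_column_eq hne (by simp [htc]), mul_zero]

omit [Fintype ι] in
theorem Matrix.inv_mulVec_eq_inv_det_smul_cramer {K : Type*} [Field K] (A : Matrix n n K)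
    (b : n → K) : A⁻¹ *ᵥ b = A.det⁻¹ • cramer A b := by
  rw [inv_def, Ring.inverse_eq_inv', smul_mulVec, cramer_eq_adjugate_mulVec]

theorem Matrix.det_smul_inv_transpose_mul_self_mul_transpose (X : Matrix ι n ℝ) :
    (Xᵀ * X).det • (Xᵀ * X)⁻¹ * Xᵀ = (Xᵀ * X).adjugate * Xᵀ := by
  by_cases h : IsUnit (Xᵀ * X).det
  · rw [inv_def, smul_smul, Ring.mul_inverse_cancel _ h, one_smul]
  · have hdet : (Xᵀ * X).det = 0 := by simpa [isUnit_iff_ne_zero] using h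
    -- `adj(XᵀX) XᵀX = 0` forces `adj(XᵀX) Xᵀ = 0`
    have hker : (Xᵀ * X).adjugate * (Xᴴ * X) = 0 := by
      rw [conjTranspose_eq_transpose_of_trivial, adjugate_mul, hdet, zero_smul]
    have hzero := (mul_conjTranspose_mul_self_eq_zero X _).mp hker
    rw [conjTranspose_eq_transpose_of_trivial] at hzero
    rw [hdet, zero_smul, Matrix.zero_mul, hzero]

theorem Matrix.det_smul_leastSquares (X : Matrix ι n ℝ) (y : ι → ℝ) :
    (Xᵀ * X).det • (((Xᵀ * X)⁻¹ * Xᵀ) *ᵥ y) = cramer (Xᵀ * X) (Xᵀ *ᵥ y) := by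
  rw [← smul_mulVec, ← Matrix.smul_mul, det_smul_inv_transpose_mul_self_mul_transpose,
    ← mulVec_mulVec, cramer_eq_adjugate_mulVec]

theorem Matrix.det_transpose_mul_self_nonneg (X : Matrix ι n ℝ) : 0 ≤ (Xᵀ * X).det := by
  simpa using (posSemidef_conjTranspose_mul_self X).det_nonneg

end LinearAlgebra

section IndependentColumns

variable {n : Type*} [Fintype n] [DecidableEq n] {E : n → Type*} [∀ c, MeasurableSpace (E c)]
  {μ : ∀ c, Measure (E c)} [∀ c, IsProbabilityMeasure (μ c)] {f : ∀ c, E c → n → ℝ}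

theorem integrable_det_of_indep_columns (hf : ∀ c a, Integrable (fun p => f c p a) (μ c)) :
    Integrable (fun S : ∀ c, E c => (of fun a c => f c (S c) a).det) (Measure.pi μ) := by
  simp_rw [det_apply', of_apply]
  exact integrable_finsetSum _ fun σ _ =>
    (Integrable.fintype_prod_dep fun c => hf c (σ c)).const_mul _

theorem integral_det_of_indep_columns (hf : ∀ c a, Integrable (fun p => f c p a) (μ c)) :
    ∫ S : ∀ c, E c, (of fun a c => f c (S c) a).det ∂(Measure.pi μ) =
      (of fun a c => ∫ p, f c p a ∂μ c).det := by
  simp_rw [det_apply', of_apply]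
  rw [integral_finsetSum _ fun σ _ =>
    (Integrable.fintype_prod_dep fun c => hf c (σ c)).const_mul _]
  refine Finset.sum_congr rfl fun σ _ => ?_
  rw [integral_const_mul, integral_fintype_prod_eq_prod fun c p => f c p (σ c)]

end IndependentColumns

section IIDSample

variable {E : Type*} [MeasurableSpace E] {μ : Measure E} [IsProbabilityMeasure μ]
  {n ι : Type*} [Fintype n] [Fintype ι]

theorem measurePreserving_comp_of_injective {t : n → ι} (ht : t.Injective) :
    MeasurePreserving (fun S : ι → E => S ∘ t) (Measure.pi fun _ => μ)
      (Measure.pi fun _ => μ) := by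
  refine ⟨by fun_prop, ?_⟩
  have hindep := (ProbabilityTheory.iIndepFun_pi (μ := fun _ : ι => μ) (X := fun _ => id)
    fun _ => aemeasurable_id).precomp ht
  rw [show (fun S : ι → E => S ∘ t) = fun S c => S (t c) from rfl,
    hindep.map_fun_eq_pi_map fun c => (measurable_pi_apply (t c)).aemeasurable]
  congr 1
  funext c
  exact (measurePreserving_eval _ (t c)).map_eq

variable [DecidableEq n] {u v : E → n → ℝ}

theorem integrable_det_comp (huv : ∀ a b, Integrable (fun p => u p a * v p b) μ) (t : n → ι) :
    Integrable (fun S : ι → E => (of fun a c => u (S (t c)) a * v (S (t c)) c).det)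
      (Measure.pi fun _ => μ) := by
  by_cases ht : t.Injective
  · exact (measurePreserving_comp_of_injective ht).integrable_comp_of_integrable
      (integrable_det_of_indep_columns (f := fun c p a => u p a * v p c) fun c a => huv a c)
  · simp_rw [fun S : ι → E => det_of_mul_eq_zero_of_not_injective (fun τ => u (S τ))
      (fun τ => v (S τ)) ht]
    exact integrable_zero _ _ _

theorem integral_det_comp_of_injective (huv : ∀ a b, Integrable (fun p => u p a * v p b) μ)
    {t : n → ι} (ht : t.Injective) :
    ∫ S : ι → E, (of fun a c => u (S (t c)) a * v (S (t c)) c).det ∂(Measure.pi fun _ => μ) =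
      (of fun a b => ∫ p, u p a * v p b ∂μ).det := by
  have hmp := measurePreserving_comp_of_injective (μ := μ) ht
  have hdet := integrable_det_of_indep_columns (μ := fun _ => μ)
    (f := fun c p a => u p a * v p c) fun c a => huv a c
  rw [← integral_det_of_indep_columns (μ := fun _ => μ) fun c a => huv a c, ← hmp.map_eq,
    integral_map hmp.measurable.aemeasurable (hmp.map_eq ▸ hdet.aestronglyMeasurable)]
  rfl

theorem integrable_det_sum_vecMulVec (huv : ∀ a b, Integrable (fun p => u p a * v p b) μ) :
    Integrable (fun S : ι → E => (∑ τ, vecMulVec (u (S τ)) (v (S τ))).det)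
      (Measure.pi fun _ => μ) := by
  simp_rw [det_sum_vecMulVec]
  exact integrable_finsetSum _ fun t _ => integrable_det_comp huv t

theorem integral_det_sum_vecMulVec (huv : ∀ a b, Integrable (fun p => u p a * v p b) μ) :
    ∫ S : ι → E, (∑ τ, vecMulVec (u (S τ)) (v (S τ))).det ∂(Measure.pi fun _ => μ) =
      (Fintype.card ι).descFactorial (Fintype.card n) *
        (of fun a b => ∫ p, u p a * v p b ∂μ).det := by
  classical
  have hterm : ∀ t : n → ι,
      ∫ S : ι → E, (of fun a c => u (S (t c)) a * v (S (t c)) c).det ∂(Measure.pi fun _ => μ) =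
        if t.Injective then (of fun a b => ∫ p, u p a * v p b ∂μ).det else 0 := by
    intro t
    split_ifs with ht
    · exact integral_det_comp_of_injective huv ht
    · simp_rw [fun S : ι → E => det_of_mul_eq_zero_of_not_injective (fun τ => u (S τ))
        (fun τ => v (S τ)) ht, integral_zero]
  simp_rw [det_sum_vecMulVec]
  rw [integral_finsetSum _ fun t _ => integrable_det_comp huv t,
    Finset.sum_congr rfl fun t _ => hterm t, Finset.sum_ite, Finset.sum_const_zero, add_zero,
    Finset.sum_const, nsmul_eq_mul, ← Fintype.card_subtype,
    Fintype.card_congr (Equiv.subtypeInjectiveEquivEmbedding n ι), Fintype.card_embedding_eq]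

end IIDSample

section LeastSquares

variable {E : Type*} [MeasurableSpace E] {μ : Measure E} [IsProbabilityMeasure μ]
  {n ι : Type*} [Fintype n] [DecidableEq n] [Fintype ι] {x : E → n → ℝ} {y : E → ℝ}

theorem det_integral_gram_nonneg (hx : ∀ a b, Integrable (fun p => x p a * x p b) μ) :
    0 ≤ (of fun a b => ∫ p, x p a * x p b ∂μ).det := by
  have h := integral_det_sum_vecMulVec (ι := n) hx
  rw [Nat.descFactorial_self] at h
  have hnonneg : 0 ≤ ∫ S : n → E, (∑ τ, vecMulVec (x (S τ)) (x (S τ))).det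
      ∂(Measure.pi fun _ => μ) :=
    integral_nonneg fun S => (posSemidef_sum _ fun τ _ => by
      simpa using posSemidef_vecMulVec_self_star (x (S τ))).det_nonneg
  rw [h] at hnonneg
  exact nonneg_of_mul_nonneg_right hnonneg (by positivity)

omit [MeasurableSpace E] in
theorem cramer_leastSquares_apply (S : ι → E) (j : n) :
    cramer ((of fun τ => x (S τ))ᵀ * of fun τ => x (S τ))
        ((of fun τ => x (S τ))ᵀ *ᵥ fun τ => y (S τ)) j =
      (∑ τ, vecMulVec (x (S τ)) (Function.update (x (S τ)) j (y (S τ)))).det := by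
  rw [cramer_apply, updateCol_transpose_mul_self]
  rfl

omit [IsProbabilityMeasure μ] [Fintype n] in
theorem integrable_mul_update (hx : ∀ a b, Integrable (fun p => x p a * x p b) μ)
    (hxy : ∀ a, Integrable (fun p => x p a * y p) μ) (j a b : n) :
    Integrable (fun p => x p a * Function.update (x p) j (y p) b) μ := by
  by_cases hb : b = j
  · subst hb; simpa using hxy a
  · simpa [hb] using hx a b

variable (hx : ∀ a b, Integrable (fun p => x p a * x p b) μ)
  (hxy : ∀ a, Integrable (fun p => x p a * y p) μ)
include hx hxy

theorem integrable_cramer_leastSquares :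
    Integrable (fun S : ι → E => cramer ((of fun τ => x (S τ))ᵀ * of fun τ => x (S τ))
        ((of fun τ => x (S τ))ᵀ *ᵥ fun τ => y (S τ))) (Measure.pi fun _ => μ) := by
  refine Integrable.of_eval fun j => ?_
  simp_rw [cramer_leastSquares_apply]
  exact integrable_det_sum_vecMulVec (v := fun p => Function.update (x p) j (y p))
    (integrable_mul_update hx hxy j)

theorem integral_cramer_leastSquares :
    ∫ S : ι → E, cramer ((of fun τ => x (S τ))ᵀ * of fun τ => x (S τ))
        ((of fun τ => x (S τ))ᵀ *ᵥ fun τ => y (S τ)) ∂(Measure.pi fun _ => μ) =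
      (Fintype.card ι).descFactorial (Fintype.card n) •
        cramer (of fun a b => ∫ p, x p a * x p b ∂μ) (fun a => ∫ p, x p a * y p ∂μ) := by
  funext j
  rw [eval_integral fun j => (integrable_cramer_leastSquares hx hxy).eval j]
  simp_rw [cramer_leastSquares_apply]
  rw [integral_det_sum_vecMulVec (v := fun p => Function.update (x p) j (y p))
    (integrable_mul_update hx hxy j), Pi.smul_apply, cramer_apply, nsmul_eq_mul]
  congr 2
  ext a b
  by_cases hb : b = j
  · subst hb; simp
  · simp [hb]

theorem integral_leastSquares_withDensity_det {Z : ℝ} (hZ : 0 < Z) :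
    ∫ S : ι → E, (((of fun τ => x (S τ))ᵀ * of fun τ => x (S τ))⁻¹ * (of fun τ => x (S τ))ᵀ) *ᵥ
        (fun τ => y (S τ))
      ∂((Measure.pi fun _ => μ).withDensity fun S =>
        ENNReal.ofReal ((∑ τ, vecMulVec (x (S τ)) (x (S τ))).det / Z)) =
      (Z⁻¹ * (Fintype.card ι).descFactorial (Fintype.card n)) •
        cramer (of fun a b => ∫ p, x p a * x p b ∂μ) (fun a => ∫ p, x p a * y p ∂μ) := by
  have hpoint : ∀ S : ι → E,
      (ENNReal.ofReal ((∑ τ, vecMulVec (x (S τ)) (x (S τ))).det / Z)).toReal •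
        ((((of fun τ => x (S τ))ᵀ * of fun τ => x (S τ))⁻¹ * (of fun τ => x (S τ))ᵀ) *ᵥ
          fun τ => y (S τ)) =
      Z⁻¹ • cramer ((of fun τ => x (S τ))ᵀ * of fun τ => x (S τ))
        ((of fun τ => x (S τ))ᵀ *ᵥ fun τ => y (S τ)) := by
    intro S
    set X : Matrix ι n ℝ := of fun τ => x (S τ)
    rw [show ∑ τ, vecMulVec (x (S τ)) (x (S τ)) = Xᵀ * X from
        (transpose_mul_eq_sum_vecMulVec_s10 X X).symm,
      ENNReal.toReal_ofReal (div_nonneg (det_transpose_mul_self_nonneg _) hZ.le),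
      div_eq_inv_mul, mul_smul, det_smul_leastSquares]
  rw [integral_withDensity_eq_integral_toReal_smul₀
      ((integrable_det_sum_vecMulVec hx).aemeasurable.div_const Z).ennreal_ofReal
      (ae_of_all _ fun _ => ENNReal.ofReal_lt_top),
    integral_congr_ae (ae_of_all _ hpoint), integral_smul, integral_cramer_leastSquares hx hxy,
    ← Nat.cast_smul_eq_nsmul ℝ, smul_smul]

end LeastSquares

theorem stmt10_general (d k : ℕ) (hdk : d ≤ k)
    (D : Measure ((Fin d → ℝ) × ℝ)) [IsProbabilityMeasure D]
    (hx2 : ∀ i j : Fin d, Integrable (fun p => p.1 i * p.1 j) D)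
    (hy2 : Integrable (fun p => p.2 ^ 2) D)
    (Sg : Matrix (Fin d) (Fin d) ℝ)
    (hSg : Sg = Matrix.of fun i j => ∫ p, p.1 i * p.1 j ∂D)
    (hinv : IsUnit Sg.det) :
    (∫ S : Fin k → (Fin d → ℝ) × ℝ,
        (((Matrix.of fun i => (S i).1)ᵀ * Matrix.of fun i => (S i).1)⁻¹ *
            (Matrix.of fun i => (S i).1)ᵀ) *ᵥ (fun i => (S i).2)
        ∂((Measure.pi fun _ : Fin k => D).withDensity fun S =>
          ENNReal.ofReal ((∑ i, vecMulVec (S i).1 (S i).1).det /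
            ((Nat.factorial d : ℝ) * (Nat.choose k d : ℝ) * Sg.det))))
    = Sg⁻¹ *ᵥ (fun i => ∫ p, p.1 i * p.2 ∂D) := by
  have hxy : ∀ a, Integrable (fun p : (Fin d → ℝ) × ℝ => p.1 a * p.2) D := fun a =>
    ((memLp_two_iff_integrable_sq (by fun_prop)).2 (by simpa [sq] using hx2 a a)).integrable_mul
      ((memLp_two_iff_integrable_sq (by fun_prop)).2 hy2)
  have hSg_pos : 0 < Sg.det :=
    lt_of_le_of_ne (hSg ▸ det_integral_gram_nonneg hx2) hinv.ne_zero.symm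
  have hchoose : 0 < (Nat.choose k d : ℝ) := by exact_mod_cast Nat.choose_pos hdk
  rw [integral_leastSquares_withDensity_det (x := Prod.fst) (y := Prod.snd) hx2 hxy
      (by positivity), inv_mulVec_eq_inv_det_smul_cramer, ← hSg, Fintype.card_fin,
    Fintype.card_fin, Nat.descFactorial_eq_factorial_mul_choose]
  congr 1
  push_cast
  field_simp

/-- For any `k ≥ d`, the least squares estimator of a size-`k`
volume-rescaled sample (with responses drawn conditionally) is unbiased. -/
theorem stmt10 (d k : ℕ) (hd : 0 < d) (hdk : d ≤ k)
    (D : Measure ((Fin d → ℝ) × ℝ)) [IsProbabilityMeasure D]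
    (hx2 : ∀ i j : Fin d, Integrable (fun p => p.1 i * p.1 j) D)
    (hy2 : Integrable (fun p => p.2 ^ 2) D)
    (Sg : Matrix (Fin d) (Fin d) ℝ)
    (hSg : Sg = Matrix.of fun i j => ∫ p, p.1 i * p.1 j ∂D)
    (hinv : IsUnit Sg.det) :
    (∫ S : Fin k → (Fin d → ℝ) × ℝ,
        (((Matrix.of fun i => (S i).1)ᵀ * Matrix.of fun i => (S i).1)⁻¹ *
            (Matrix.of fun i => (S i).1)ᵀ) *ᵥ (fun i => (S i).2)
        ∂((Measure.pi fun _ : Fin k => D).withDensity fun S =>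
          ENNReal.ofReal ((∑ i, vecMulVec (S i).1 (S i).1).det /
            ((Nat.factorial d : ℝ) * (Nat.choose k d : ℝ) * Sg.det))))
    = Sg⁻¹ *ᵥ (fun i => ∫ p, p.1 i * p.2 ∂D) :=
  stmt10_general d k hdk D hx2 hy2 Sg hSg hinv
end

section
/- Kantorovich inequality: if 0 < a <= lambda_1,...,lambda_d <= b, then the ratio of the arithmetic mean to the harmonic mean of lambda_1,...,lambda_d is at most ((a+b)/2)^2 / (a b), i.e. (A(lambda)/H(lambda)) <= (A(a,b)/G(a,b))^2. -/
/-- Kantorovich inequality: the ratio of the arithmetic mean to the harmonic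
mean of `λ₁,…,λ_d ∈ [a,b]` (with `0 < a`) is at most `((a+b)/2)² / (ab)`. -/
theorem stmt15 (d : ℕ) (hd : 0 < d) (a b : ℝ) (ha : 0 < a) (hab : a ≤ b)
    (lam : Fin d → ℝ) (hlam : ∀ i, lam i ∈ Set.Icc a b) :
    ((∑ i, lam i) / d) / ((d : ℝ) / ∑ i, (lam i)⁻¹)
      ≤ ((a + b) / 2) ^ 2 / (a * b) := by
  set S := ∑ i, lam i with hS
  set T := ∑ i, (lam i)⁻¹ with hT
  have hdp : (0:ℝ) < d := by exact_mod_cast hd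
  have hb : 0 < b := lt_of_lt_of_le ha hab
  have hpos : ∀ i, 0 < lam i := fun i => lt_of_lt_of_le ha (hlam i).1
  have hSpos : 0 < S := Finset.sum_pos (fun i _ => hpos i) (by
    simpa [Finset.univ_nonempty_iff] using Fin.pos_iff_nonempty.mp hd)
  have hTpos : 0 < T := Finset.sum_pos (fun i _ => inv_pos.mpr (hpos i)) (by
    simpa [Finset.univ_nonempty_iff] using Fin.pos_iff_nonempty.mp hd)
  have hTle : T ≤ (d * (a + b) - S) / (a * b) := by
    have h1 : ∀ i, (lam i)⁻¹ ≤ (a + b - lam i) / (a * b) := by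
      intro i
      have h := hlam i
      have hli := hpos i
      rw [inv_le_iff_one_le_mul₀ hli] at *
      rw [div_mul_eq_mul_div, le_div_iff₀ (by positivity)]
      nlinarith [mul_nonneg (sub_nonneg.mpr h.1) (sub_nonneg.mpr h.2)]
    calc T ≤ ∑ i, (a + b - lam i) / (a * b) :=
          Finset.sum_le_sum (fun i _ => h1 i)
      _ = (d * (a + b) - S) / (a * b) := by
          rw [← Finset.sum_div, Finset.sum_sub_distrib]
          simp only [Finset.sum_const, Finset.card_univ, Fintype.card_fin, nsmul_eq_mul, hS]
  have key : S * T ≤ (d * (a + b)) ^ 2 / 4 / (a * b) := by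
    calc S * T ≤ S * ((d * (a + b) - S) / (a * b)) :=
          mul_le_mul_of_nonneg_left hTle hSpos.le
      _ ≤ (d * (a + b)) ^ 2 / 4 / (a * b) := by
          rw [← mul_div_assoc, div_le_div_iff₀ (by positivity) (by positivity)]
          nlinarith [mul_nonneg (sq_nonneg ((d:ℝ) * (a + b) - 2 * S)) (mul_pos ha hb).le]
  have key2 : S * T * (a * b) * 4 ≤ (↑d * (a + b)) ^ 2 := by
    rw [div_div, le_div_iff₀ (by positivity)] at key
    nlinarith [key]
  rw [div_div_div_comm, div_le_div_iff₀ (by positivity) (by positivity),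
    div_mul_eq_mul_div, ← mul_div_assoc, div_le_div_iff₀ hdp hTpos]
  nlinarith [key2]
end

section
/- If all eigenvalues of Sigma_hat Sigma^{-1} lie in [1-eps, 1+eps] with eps = 1/sqrt(2d) (Sigma, Sigma_hat positive definite), then det(Sigma Sigma_hat^{-1}) / ((tr(Sigma Sigma_hat^{-1})/d)^d >= ((1-eps)(1+eps))^d = (1 - 1/(2d))^d >= 1/2. -/
/-!
The symmetric matrix `B = Σ̂^{-1/2} Σ Σ̂^{-1/2}` is similar to `Σ Σ̂⁻¹`, and conjugating the
Loewner bounds by `Σ̂^{-1/2}` gives `(1 - ε) B ⪯ 1 ⪯ (1 + ε) B`, i.e.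
`(1 - ε) μ ≤ 1 ≤ (1 + ε) μ` for every eigenvalue `μ` of `B`. Then `((1 - ε) μ - 1)((1 + ε) μ - 1) ≤ 0`, which rearranges to
`(1 - ε²) μ - 1 ≤ 1 - 1/μ ≤ log μ`. Summing, and using `log x ≤ x - 1` at `x = (1 - ε²) tr B / d`,
gives `d log ((1 - ε²) tr B / d) ≤ log det B`. Since `ε² = 1/(2d)`, Bernoulli's inequality
bounds `(1 - 1/(2d))^d` below by `1/2`.
-/

open Matrix

open scoped MatrixOrder

namespace Matrix

variable {n : Type*} [Fintype n] [DecidableEq n]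

noncomputable def whiten (S A : Matrix n n ℝ) : Matrix n n ℝ :=
  (CFC.sqrt S)⁻¹ * A * (CFC.sqrt S)⁻¹

variable {S A : Matrix n n ℝ}

lemma isHermitian_inv_sqrt (S : Matrix n n ℝ) : (CFC.sqrt S)⁻¹.IsHermitian :=
  (CFC.sqrt_nonneg S).posSemidef.isHermitian.inv

lemma whiten_mono {A A' : Matrix n n ℝ} (h : A ≤ A') : whiten S A ≤ whiten S A' :=
  (isHermitian_inv_sqrt S).isSelfAdjoint.conjugate_le_conjugate h

lemma whiten_smul (c : ℝ) : whiten S (c • A) = c • whiten S A := by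
  rw [whiten, whiten, Matrix.mul_smul, Matrix.smul_mul]

lemma whiten_self (hS : S.PosDef) : whiten S S = 1 := by
  have hsq := CFC.sqrt_mul_sqrt_self S hS.posSemidef.nonneg
  have hdet : IsUnit (CFC.sqrt S).det := isUnit_iff_ne_zero.mpr <|
    left_ne_zero_of_mul (by rw [← det_mul, hsq]; exact hS.det_pos.ne')
  rw [whiten]
  nth_rw 2 [← hsq]
  rw [← Matrix.mul_assoc, nonsing_inv_mul _ hdet, Matrix.one_mul, mul_nonsing_inv _ hdet]

lemma smul_whiten_le_one (hS : S.PosDef) {c : ℝ} (h : c • A ≤ S) : c • whiten S A ≤ 1 := by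
  rw [← whiten_smul, ← whiten_self hS]
  exact whiten_mono h

lemma one_le_smul_whiten (hS : S.PosDef) {c : ℝ} (h : S ≤ c • A) : 1 ≤ c • whiten S A := by
  rw [← whiten_smul, ← whiten_self hS]
  exact whiten_mono h

lemma IsHermitian.whiten (hA : A.IsHermitian) : (whiten S A).IsHermitian := by
  have h := isHermitian_conjTranspose_mul_mul (CFC.sqrt S)⁻¹ hA
  rwa [(isHermitian_inv_sqrt S).eq] at h

lemma inv_eq_inv_sqrt_mul_inv_sqrt (hS : S.PosSemidef) :
    S⁻¹ = (CFC.sqrt S)⁻¹ * (CFC.sqrt S)⁻¹ := by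
  rw [← Matrix.mul_inv_rev, CFC.sqrt_mul_sqrt_self S hS.nonneg]

lemma det_whiten (hS : S.PosSemidef) : (whiten S A).det = (A * S⁻¹).det := by
  rw [inv_eq_inv_sqrt_mul_inv_sqrt hS, whiten]
  simp only [det_mul]
  ring

lemma trace_whiten (hS : S.PosSemidef) : (whiten S A).trace = (A * S⁻¹).trace := by
  rw [inv_eq_inv_sqrt_mul_inv_sqrt hS, whiten, trace_mul_cycle, trace_mul_comm A]

lemma IsHermitian.dotProduct_smul_sub_one_mulVec_eigenvectorBasis {B : Matrix n n ℝ}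
    (hB : B.IsHermitian) (c : ℝ) (i : n) :
    ⇑(hB.eigenvectorBasis i) ⬝ᵥ ((c • B - 1) *ᵥ ⇑(hB.eigenvectorBasis i)) =
      c * hB.eigenvalues i - 1 := by
  have hunit : ⇑(hB.eigenvectorBasis i) ⬝ᵥ ⇑(hB.eigenvectorBasis i) = 1 := by
    have h := hB.eigenvectorBasis.inner_eq_one i
    rwa [EuclideanSpace.inner_eq_star_dotProduct, star_trivial] at h
  simp [sub_mulVec, smul_mulVec, hB.mulVec_eigenvectorBasis, dotProduct_sub, hunit]

lemma IsHermitian.mul_eigenvalues_le_one {B : Matrix n n ℝ} (hB : B.IsHermitian) {c : ℝ}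
    (h : c • B ≤ 1) (i : n) : c * hB.eigenvalues i ≤ 1 := by
  have := (le_iff.mp h).dotProduct_mulVec_nonneg (hB.eigenvectorBasis i)
  rw [star_trivial, ← neg_sub, neg_mulVec, dotProduct_neg,
    hB.dotProduct_smul_sub_one_mulVec_eigenvectorBasis] at this
  linarith

lemma IsHermitian.one_le_mul_eigenvalues {B : Matrix n n ℝ} (hB : B.IsHermitian) {c : ℝ}
    (h : 1 ≤ c • B) (i : n) : 1 ≤ c * hB.eigenvalues i := by
  have := (le_iff.mp h).dotProduct_mulVec_nonneg (hB.eigenvectorBasis i)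
  rw [star_trivial, hB.dotProduct_smul_sub_one_mulVec_eigenvectorBasis] at this
  linarith

end Matrix

namespace Real

lemma one_sub_sq_mul_sub_one_le_log {ε μ : ℝ} (hμ : 0 < μ) (hlo : (1 - ε) * μ ≤ 1)
    (hhi : 1 ≤ (1 + ε) * μ) : (1 - ε ^ 2) * μ - 1 ≤ log μ := by
  have hquad : (1 - ε ^ 2) * μ ^ 2 - 2 * μ + 1 ≤ 0 := by
    nlinarith [mul_nonpos_of_nonpos_of_nonneg (sub_nonpos.2 hlo) (sub_nonneg.2 hhi)]
  have hlog : 1 - μ⁻¹ ≤ log μ := by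
    have h := log_le_sub_one_of_pos (inv_pos.2 hμ)
    rw [log_inv] at h
    linarith
  have : (1 - ε ^ 2) * μ - 1 ≤ 1 - μ⁻¹ := by
    rw [← mul_le_mul_iff_of_pos_left hμ]
    field_simp
    nlinarith
  linarith

lemma mul_mean_pow_card_le_prod {ι : Type*} [Fintype ι] [Nonempty ι] {c : ℝ} (hc : 0 < c)
    {μ : ι → ℝ} (hμ : ∀ i, 0 < μ i) (hlog : ∀ i, c * μ i - 1 ≤ log (μ i)) :
    (c * ((∑ i, μ i) / Fintype.card ι)) ^ Fintype.card ι ≤ ∏ i, μ i := by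
  set d : ℝ := (Fintype.card ι : ℝ)
  have hd : 0 < d := Nat.cast_pos.2 Fintype.card_pos
  have hmean : 0 < c * ((∑ i, μ i) / d) :=
    mul_pos hc (div_pos (Finset.sum_pos (fun i _ => hμ i) Finset.univ_nonempty) hd)
  rw [← log_le_log_iff (pow_pos hmean _) (Finset.prod_pos fun i _ => hμ i), log_pow,
    log_prod fun i _ => (hμ i).ne']
  calc d * log (c * ((∑ i, μ i) / d)) ≤ d * (c * ((∑ i, μ i) / d) - 1) :=
        mul_le_mul_of_nonneg_left (log_le_sub_one_of_pos hmean) hd.le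
    _ = ∑ i, (c * μ i - 1) := by
        rw [Finset.sum_sub_distrib, ← Finset.mul_sum, Finset.sum_const, Finset.card_univ]
        field_simp
        simp [d]
    _ ≤ ∑ i, log (μ i) := Finset.sum_le_sum fun i _ => hlog i

lemma half_le_one_sub_inv_two_mul_pow (n : ℕ) : 1 / 2 ≤ (1 - 1 / (2 * (n : ℝ))) ^ n := by
  rcases n.eq_zero_or_pos with rfl | hn
  · norm_num
  have hn' : (1 : ℝ) ≤ n := Nat.one_le_cast.2 hn
  calc (1 : ℝ) / 2 = 1 + n * -(1 / (2 * n)) := by field_simp; ring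
    _ ≤ (1 + -(1 / (2 * n))) ^ n := one_add_mul_le_pow (by
        rw [neg_le_neg_iff, div_le_iff₀ (by positivity)]; linarith) n
    _ = (1 - 1 / (2 * (n : ℝ))) ^ n := by rw [← sub_eq_add_neg]

end Real

/-- If `(1-ε)Σ ⪯ Σ̂ ⪯ (1+ε)Σ` in the Loewner order with `ε = 1/√(2d)`, then
`det(ΣΣ̂⁻¹) / (tr(ΣΣ̂⁻¹)/d)^d ≥ (1 - 1/(2d))^d ≥ 1/2`. -/
theorem stmt16 (d : ℕ) (hd : 0 < d)
    (Sg Sh : Matrix (Fin d) (Fin d) ℝ) (hSg : Sg.PosDef) (hSh : Sh.PosDef)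
    (hlo : (Sh - (1 - 1 / Real.sqrt (2 * d)) • Sg).PosSemidef)
    (hhi : ((1 + 1 / Real.sqrt (2 * d)) • Sg - Sh).PosSemidef) :
    (Sg * Sh⁻¹).det / ((Sg * Sh⁻¹).trace / d) ^ d ≥ (1 - 1 / (2 * (d : ℝ))) ^ d
      ∧ (1 - 1 / (2 * (d : ℝ))) ^ d ≥ 1 / 2 := by
  have hd' : (1 : ℝ) ≤ d := Nat.one_le_cast.2 hd
  set ε := 1 / Real.sqrt (2 * d) with hε
  have hε_sq : ε ^ 2 = 1 / (2 * d) := by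
    rw [hε, div_pow, one_pow, Real.sq_sqrt (by positivity)]
  set B := whiten Sh Sg
  have hB : B.IsHermitian := hSg.isHermitian.whiten
  have hBlo : (1 - ε) • B ≤ 1 := smul_whiten_le_one hSh hlo
  have hBhi : 1 ≤ (1 + ε) • B := one_le_smul_whiten hSh hhi
  have hμ (i : Fin d) : 0 < hB.eigenvalues i :=
    pos_of_mul_pos_right ((hB.one_le_mul_eigenvalues hBhi i).trans_lt' one_pos) (by positivity)
  have : Nonempty (Fin d) := Fin.pos_iff_nonempty.mp hd
  have hc : 0 < 1 - ε ^ 2 := by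
    rw [hε_sq, sub_pos, div_lt_one (by positivity)]
    linarith
  have key := Real.mul_mean_pow_card_le_prod hc hμ fun i =>
    Real.one_sub_sq_mul_sub_one_le_log (hμ i) (hB.mul_eigenvalues_le_one hBlo i)
      (hB.one_le_mul_eigenvalues hBhi i)
  have hdet : (Sg * Sh⁻¹).det = ∏ i, hB.eigenvalues i := by
    simpa [← det_whiten hSh.posSemidef] using hB.det_eq_prod_eigenvalues
  have htr : (Sg * Sh⁻¹).trace = ∑ i, hB.eigenvalues i := by
    simpa [← trace_whiten hSh.posSemidef] using hB.trace_eq_sum_eigenvalues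
  have hsum : 0 < ∑ i, hB.eigenvalues i := Finset.sum_pos (fun i _ => hμ i) Finset.univ_nonempty
  refine ⟨?_, Real.half_le_one_sub_inv_two_mul_pow d⟩
  rw [hdet, htr, ge_iff_le, le_div_iff₀ (pow_pos (div_pos hsum (by positivity)) d), ← hε_sq,
    ← mul_pow]
  simpa using key
end
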